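/- arXiv:2007.13425 — 11 statements merged into one kernel-verified Lean document; each statement's English description precedes it below -/
import Mathlib

section
/- Suppose α is an allowed elementary (n+1)-path, γ an allowed elementary n-path, and β an allowed elementary (n−1)-path in a digraph G, with β < γ < α (each obtained from the next by deleting one vertex so that the result is still allowed), and suppose α, γ, β all have the same starting vertex and the same ending vertex. Then either (a) there exists an allowed elementary n-path γ' ≠ γ with β < γ' < α, or (b) β is obtained from α = v_0 v_1 ⋯ v_{n+1} by removing two consecutive vertices v_i and v_{i+1} for some 1 ≤ i ≤ n−1. -/
/-!
Write `g = a.eraseIdx i` and `b = g.eraseIdx j`. Since an edge never joins a vertex to itself,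
deleting the first or last vertex of an allowed path changes that endpoint, so both deletions are
interior. Thus `b` is `a` with two interior positions `k < l` removed. If `l = k + 1` this is
alternative (b). Otherwise `a[k+1]` survives in `b` next to `a[k-1]`, and `a[l-1]` next to
`a[l+1]`, so `a.eraseIdx k` and `a.eraseIdx l` are both allowed: each glues a piece of `b` to a
piece of `a` along a nonempty overlap. They differ at position `k` because `a[k] ≠ a[k+1]`, and
the one that is not `g` is the required `g'`.
-/

/-- A digraph: a vertex set together with an irreflexive edge relation supported on the
vertex set (edges are ordered pairs off the diagonal). -/
structure DiGraph (V : Type) where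
  verts : Set V
  Edge : V → V → Prop
  edge_mem_left : ∀ u v, Edge u v → u ∈ verts
  edge_mem_right : ∀ u v, Edge u v → v ∈ verts
  edge_ne : ∀ u v, Edge u v → u ≠ v

variable {V : Type}

/-- An allowed elementary path: a nonempty list of vertices of `G` such that each
consecutive pair is a directed edge of `G`. -/
def IsAllowed (G : DiGraph V) (p : List V) : Prop :=
  p ≠ [] ∧ (∀ v ∈ p, v ∈ G.verts) ∧ p.Chain' G.Edge

/-- `Del p q` : `p` is obtained from `q` by deleting one vertex. -/
def Del (p q : List V) : Prop := ∃ i < q.length, p = q.eraseIdx i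

/-- Value of a function on vertices extended to a path: the sum over its vertices. -/
def fval (f : V → ℝ) (p : List V) : ℝ := (p.map f).sum

/-- A discrete Morse function on a digraph `G`: a nonnegative function on vertices such
that for every allowed elementary path `p` there is (i) at most one allowed elementary
path obtained from `p` by deleting one vertex with the same `f`-value, and (ii) at most
one allowed elementary path obtained from `p` by inserting one vertex with the same
`f`-value. -/
def IsMorse (G : DiGraph V) (f : V → ℝ) : Prop :=
  (∀ v, 0 ≤ f v) ∧
  ∀ p, IsAllowed G p →
    ((∀ β β', IsAllowed G β → Del β p → fval f β = fval f p →
        IsAllowed G β' → Del β' p → fval f β' = fval f p → β = β') ∧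
     (∀ α α', IsAllowed G α → Del p α → fval f α = fval f p →
        IsAllowed G α' → Del p α' → fval f α' = fval f p → α = α'))

/-- An allowed elementary path is critical if no allowed path obtained by deleting one
vertex has the same `f`-value, and no allowed path obtained by inserting one vertex has
the same `f`-value. -/
def IsCritical (G : DiGraph V) (f : V → ℝ) (p : List V) : Prop :=
  (¬ ∃ β, IsAllowed G β ∧ Del β p ∧ fval f β = fval f p) ∧
  (¬ ∃ α, IsAllowed G α ∧ Del p α ∧ fval f α = fval f p)

/-- A directed loop: an allowed elementary path `v₀ v₁ ⋯ vₙ v₀` with `n ≥ 1`. -/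
def IsLoop (G : DiGraph V) (p : List V) : Prop :=
  IsAllowed G p ∧ 3 ≤ p.length ∧ p.head? = p.getLast?

/-- A simplicial allowed elementary path: all vertices distinct. -/
def Simplicial (G : DiGraph V) (p : List V) : Prop := IsAllowed G p ∧ p.Nodup

/-- A pair of the combinatorial discrete gradient vector field `M(G,f)`:
`β` is obtained from `α` by inserting one vertex, and `f(α) = f(β)`. -/
def MPair (G : DiGraph V) (f : V → ℝ) (α β : List V) : Prop :=
  IsAllowed G α ∧ IsAllowed G β ∧ Del α β ∧ fval f α = fval f β

/-- `H` is a sub-digraph of `G`. -/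
def Subdigraph (H G : DiGraph V) : Prop :=
  H.verts ⊆ G.verts ∧ ∀ u v, H.Edge u v → G.Edge u v

namespace List

variable {α : Type*} {R : α → α → Prop}

theorem eraseIdx_eraseIdx_of_le (l : List α) {i j : ℕ} (h : i ≤ j) :
    (l.eraseIdx i).eraseIdx j = (l.eraseIdx (j + 1)).eraseIdx i := by
  apply ext_getElem?
  intro t
  simp only [getElem?_eraseIdx]
  split_ifs <;> first | rfl | omega

theorem IsChain.ne_zero_of_head?_eraseIdx_eq [Std.Irrefl R] {l : List α} {i : ℕ}
    (hl : l.IsChain R) (hne : l ≠ []) (h : (l.eraseIdx i).head? = l.head?) : i ≠ 0 := by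
  rintro rfl
  obtain ⟨x, t, rfl⟩ := exists_cons_of_ne_nil hne
  rw [eraseIdx_zero, tail_cons, head?_cons] at h
  exact irrefl x (hl.rel_head? h)

theorem IsChain.ne_length_sub_one_of_getLast?_eraseIdx_eq [Std.Irrefl R] {l : List α} {i : ℕ}
    (hl : l.IsChain R) (hne : l ≠ []) (h : (l.eraseIdx i).getLast? = l.getLast?) :
    i ≠ l.length - 1 := by
  rintro rfl
  obtain ⟨t, x, rfl⟩ : ∃ t x, l = t ++ [x] := ⟨_, _, (dropLast_concat_getLast hne).symm⟩
  rw [eraseIdx_length_sub_one, dropLast_concat, getLast?_concat] at h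
  exact irrefl x ((isChain_append.1 hl).2.2 x h x rfl)

theorem exists_eq_append_cons_of_lt_length {a : List α} {k : ℕ} (hk : k < a.length) :
    ∃ p x s, a = p ++ x :: s ∧ p.length = k :=
  ⟨a.take k, a[k], a.drop (k + 1), by rw [← drop_eq_getElem_cons, take_append_drop],
    length_take_of_le hk.le⟩

theorem IsChain.eraseIdx_of_eraseIdx_eraseIdx {a : List α} {k l : ℕ} (ha : a.IsChain R)
    (hkl : k + 2 ≤ l) (hl : l < a.length) (hb : ((a.eraseIdx l).eraseIdx k).IsChain R) :
    (a.eraseIdx k).IsChain R ∧ (a.eraseIdx l).IsChain R := by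
  obtain ⟨p, x, s, rfl, rfl⟩ := exists_eq_append_cons_of_lt_length (by omega : k < a.length)
  obtain ⟨q, y, r, rfl, hqlen⟩ :=
    exists_eq_append_cons_of_lt_length (a := s) (k := l - p.length - 1) (by simp at hl; omega)
  obtain rfl : l = p.length + q.length + 1 := by omega
  have hq : q ≠ [] := by rintro rfl; simp at hkl
  have hx : (p ++ x :: (q ++ y :: r)).eraseIdx p.length = p ++ q ++ y :: r := by
    rw [eraseIdx_append_of_length_le le_rfl]; simp
  have hy :
      (p ++ x :: (q ++ y :: r)).eraseIdx (p.length + q.length + 1) = p ++ [x] ++ q ++ r := by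
    rw [show p ++ x :: (q ++ y :: r) = (p ++ x :: q) ++ y :: r by simp,
      eraseIdx_append_of_length_le (by simp; omega)]
    simp
  have hxy : (p ++ [x] ++ q ++ r).eraseIdx p.length = p ++ q ++ r := by
    rw [append_assoc, append_assoc, eraseIdx_append_of_length_le le_rfl]; simp
  rw [hy, hxy] at hb
  rw [hx, hy]
  constructor
  · refine hb.left_of_append.append_overlap ?_ hq
    simpa using ha.right_of_append.tail
  · refine IsChain.append_overlap ?_ ?_ hq
    · simpa using (show ((p ++ x :: q) ++ y :: r).IsChain R by simpa using ha).left_of_append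
    · exact (show (p ++ (q ++ r)).IsChain R by simpa using hb).right_of_append

theorem IsChain.eraseIdx_ne_eraseIdx [Std.Irrefl R] {a : List α} {k l : ℕ} (ha : a.IsChain R)
    (hkl : k < l) (hl : l < a.length) : a.eraseIdx k ≠ a.eraseIdx l := by
  intro h
  have hk := congrArg (·[k]?) h
  simp only [getElem?_eraseIdx, lt_irrefl, if_false, hkl, if_true] at hk
  rw [getElem?_eq_getElem (by omega), getElem?_eq_getElem (by omega), Option.some.injEq] at hk
  exact irrefl _ (hk ▸ isChain_iff_getElem.1 ha k (by omega))

end List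

instance DiGraph.instIrreflEdge (G : DiGraph V) : Std.Irrefl G.Edge :=
  ⟨fun v h => G.edge_ne v v h rfl⟩

namespace IsAllowed

variable {G : DiGraph V} {a : List V}

theorem isChain (ha : IsAllowed G a) : a.IsChain G.Edge := ha.2.2

theorem eraseIdx (ha : IsAllowed G a) {m : ℕ} (h2 : 2 ≤ a.length)
    (hc : (a.eraseIdx m).IsChain G.Edge) : IsAllowed G (a.eraseIdx m) :=
  ⟨List.eraseIdx_ne_nil_iff.2 (.inl h2), fun v hv => ha.2.1 v (List.mem_of_mem_eraseIdx hv), hc⟩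

theorem exists_other_middle {g : List V} {k l : ℕ} (ha : IsAllowed G a) (hkl : k + 2 ≤ l)
    (hl : l < a.length) (hb : IsAllowed G ((a.eraseIdx l).eraseIdx k))
    (hg : g = a.eraseIdx k ∨ g = a.eraseIdx l) :
    ∃ g', IsAllowed G g' ∧ g' ≠ g ∧ Del g' a ∧ Del ((a.eraseIdx l).eraseIdx k) g' := by
  obtain ⟨hck, hcl⟩ := ha.isChain.eraseIdx_of_eraseIdx_eraseIdx hkl hl hb.isChain
  have hne := ha.isChain.eraseIdx_ne_eraseIdx (by omega : k < l) hl
  have hdk : Del ((a.eraseIdx l).eraseIdx k) (a.eraseIdx k) := by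
    refine ⟨l - 1, by simp [List.length_eraseIdx_of_lt (by omega : k < a.length)]; omega, ?_⟩
    rw [List.eraseIdx_eraseIdx_of_le a (by omega : k ≤ l - 1), Nat.sub_add_cancel (by omega)]
  have hdl : Del ((a.eraseIdx l).eraseIdx k) (a.eraseIdx l) :=
    ⟨k, by simp [List.length_eraseIdx_of_lt hl]; omega, rfl⟩
  rcases hg with rfl | rfl
  · exact ⟨a.eraseIdx l, ha.eraseIdx (by omega) hcl, hne.symm, ⟨l, hl, rfl⟩, hdl⟩
  · exact ⟨a.eraseIdx k, ha.eraseIdx (by omega) hck, hne, ⟨k, by omega, rfl⟩, hdk⟩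

end IsAllowed

theorem exists_other_middle_or_consecutive_same_ends_general (G : DiGraph V) (n : ℕ)
    (a g b : List V)
    (ha : IsAllowed G a) (hg : IsAllowed G g) (hb : IsAllowed G b)
    (hlen : a.length = n + 2)
    (hga : Del g a) (hbg : Del b g)
    (hhead₁ : a.head? = g.head?) (hhead₂ : g.head? = b.head?)
    (hlast₁ : a.getLast? = g.getLast?) (hlast₂ : g.getLast? = b.getLast?) :
    (∃ g', IsAllowed G g' ∧ g' ≠ g ∧ Del g' a ∧ Del b g') ∨
    (∃ i, 1 ≤ i ∧ i ≤ n - 1 ∧ b = (a.eraseIdx i).eraseIdx i) := by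
  obtain ⟨i, hi, rfl⟩ := hga
  obtain ⟨j, hj, rfl⟩ := hbg
  have hglen : (a.eraseIdx i).length = n + 1 := by simp [List.length_eraseIdx_of_lt hi, hlen]
  have hi₀ := ha.isChain.ne_zero_of_head?_eraseIdx_eq ha.1 hhead₁.symm
  have hiₙ := ha.isChain.ne_length_sub_one_of_getLast?_eraseIdx_eq ha.1 hlast₁.symm
  have hj₀ := hg.isChain.ne_zero_of_head?_eraseIdx_eq hg.1 hhead₂.symm
  have hjₙ := hg.isChain.ne_length_sub_one_of_getLast?_eraseIdx_eq hg.1 hlast₂.symm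
  rw [hlen] at hi hiₙ
  rw [hglen] at hj hjₙ
  rcases lt_trichotomy j i with hji | rfl | hij
  · rcases (Nat.succ_le_of_lt hji).eq_or_lt with rfl | hji
    · exact .inr ⟨j, by omega, by omega, (List.eraseIdx_eraseIdx_of_le a le_rfl).symm⟩
    · exact .inl (ha.exists_other_middle hji (by omega) hb (.inr rfl))
  · exact .inr ⟨j, by omega, by omega, rfl⟩
  · rw [List.eraseIdx_eraseIdx_of_le a hij.le] at hb ⊢
    exact .inl (ha.exists_other_middle (by omega) (by omega) hb (.inl rfl))

/-- If `α > γ > β` are allowed elementary paths (each obtained from the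
next by deleting one vertex), of dimensions `n+1`, `n`, `n−1`, all with the same starting
vertex and the same ending vertex, then either there is an allowed elementary `n`-path
`γ' ≠ γ` with `β < γ' < α`, or `β` is obtained from `α = v₀⋯v_{n+1}` by removing two
consecutive vertices `vᵢ, v_{i+1}` with `1 ≤ i ≤ n−1`. -/
theorem exists_other_middle_or_consecutive_same_ends (G : DiGraph V) (n : ℕ) (hn : 1 ≤ n)
    (a g b : List V)
    (ha : IsAllowed G a) (hg : IsAllowed G g) (hb : IsAllowed G b)
    (hlen : a.length = n + 2)
    (hga : Del g a) (hbg : Del b g)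
    (hhead₁ : a.head? = g.head?) (hhead₂ : g.head? = b.head?)
    (hlast₁ : a.getLast? = g.getLast?) (hlast₂ : g.getLast? = b.getLast?) :
    (∃ g', IsAllowed G g' ∧ g' ≠ g ∧ Del g' a ∧ Del b g') ∨
    (∃ i, 1 ≤ i ∧ i ≤ n - 1 ∧ b = (a.eraseIdx i).eraseIdx i) :=
  exists_other_middle_or_consecutive_same_ends_general G n a g b ha hg hb hlen hga hbg hhead₁ hhead₂
    hlast₁ hlast₂
end

section
/- Suppose α is an allowed elementary (n+1)-path, γ an allowed elementary n-path, and β an allowed elementary (n−1)-path in a digraph G with β < γ < α. Then either (a) there exists an allowed elementary n-path γ' ≠ γ with β < γ' < α, or (b) β is obtained from α = v_0 v_1 ⋯ v_{n+1} by removing two consecutive vertices v_i and v_{i+1} for some 0 ≤ i ≤ n. -/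
variable {V : Type}

theorem List.eraseIdx_length_append_cons {α : Type*} (l r : List α) (x : α) :
    (l ++ x :: r).eraseIdx l.length = l ++ r := by
  simp [List.eraseIdx_append_of_length_le]

theorem del_iff_exists_append_cons {p q : List V} :
    Del p q ↔ ∃ l x r, q = l ++ x :: r ∧ p = l ++ r := by
  constructor
  · rintro ⟨i, hi, rfl⟩
    refine ⟨q.take i, q[i], q.drop (i + 1), ?_, List.eraseIdx_eq_take_drop_succ q i⟩
    rw [List.getElem_cons_drop, List.take_append_drop]
  · rintro ⟨l, x, r, rfl, rfl⟩
    exact ⟨l.length, by simp, (List.eraseIdx_length_append_cons l r x).symm⟩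

theorem del_append_cons (l r : List V) (x : V) : Del (l ++ r) (l ++ x :: r) :=
  del_iff_exists_append_cons.2 ⟨l, x, r, rfl, rfl⟩

theorem exists_eq_of_del_del {a g b : List V} (hga : Del g a) (hbg : Del b g) :
    ∃ l x m y r, a = l ++ x :: m ++ y :: r ∧ b = l ++ m ++ r ∧
      (g = l ++ m ++ y :: r ∨ g = l ++ x :: m ++ r) := by
  obtain ⟨l, x, r, rfl, rfl⟩ := del_iff_exists_append_cons.1 hga
  obtain ⟨l', y, r', hg, rfl⟩ := del_iff_exists_append_cons.1 hbg
  rcases List.append_eq_append_iff.1 hg with ⟨m, rfl, rfl⟩ | ⟨c, rfl, hc⟩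
  · exact ⟨l, x, m, y, r', by simp, by simp, Or.inl (by simp)⟩
  rcases List.cons_eq_append_iff.1 hc with ⟨rfl, rfl⟩ | ⟨m, rfl, rfl⟩
  · exact ⟨l', x, [], y, r', by simp, by simp, Or.inl (by simp)⟩
  · exact ⟨l', y, m, x, r, by simp, by simp, Or.inr (by simp)⟩

theorem List.IsChain.erase_each_of_erase_both {α : Type*} {R : α → α → Prop}
    {l m r : List α} {x y : α} (hm : m ≠ [])
    (ha : (l ++ x :: m ++ y :: r).IsChain R) (hb : (l ++ m ++ r).IsChain R) :
    (l ++ m ++ y :: r).IsChain R ∧ (l ++ x :: m ++ r).IsChain R := by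
  constructor
  · refine List.IsChain.append_overlap hb.left_of_append ?_ hm
    exact (show ((l ++ [x]) ++ (m ++ y :: r)).IsChain R by simpa using ha).right_of_append
  · have hxm : (l ++ [x] ++ m).IsChain R := by simpa using ha.left_of_append
    have hmr : (m ++ r).IsChain R :=
      (show (l ++ (m ++ r)).IsChain R by simpa using hb).right_of_append
    simpa using hxm.append_overlap hmr hm

theorem IsAllowed.of_isChain_of_subset {G : DiGraph V} {p q : List V} (hq : IsAllowed G q)
    (hp : p ≠ []) (hpq : p ⊆ q) (hc : p.IsChain G.Edge) : IsAllowed G p :=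
  ⟨hp, fun v hv ↦ hq.2.1 v (hpq hv), hc⟩

theorem IsAllowed.erase_each_of_erase_both {G : DiGraph V} {l m r : List V} {x y : V}
    (hm : m ≠ []) (ha : IsAllowed G (l ++ x :: m ++ y :: r)) (hb : IsAllowed G (l ++ m ++ r)) :
    IsAllowed G (l ++ m ++ y :: r) ∧ IsAllowed G (l ++ x :: m ++ r) ∧
      l ++ m ++ y :: r ≠ l ++ x :: m ++ r := by
  obtain ⟨hcy, hcx⟩ := List.IsChain.erase_each_of_erase_both hm ha.2.2 hb.2.2
  refine ⟨ha.of_isChain_of_subset (by simp) (fun v ↦ by simp; tauto) hcy,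
    ha.of_isChain_of_subset (by simp) (fun v ↦ by simp; tauto) hcx, fun h ↦ ?_⟩
  obtain ⟨z, m, rfl⟩ := List.exists_cons_of_ne_nil hm
  have hxz : G.Edge x z := by
    simpa using ha.2.2.infix (⟨l, m ++ y :: r, by simp⟩ : [x, z] <:+: _)
  simp only [List.append_assoc, List.cons_append, List.append_cancel_left_eq,
    List.cons.injEq] at h
  exact G.edge_ne x z hxz h.1.symm

theorem exists_other_middle_or_consecutive_general (G : DiGraph V) (n : ℕ)
    (a g b : List V)
    (ha : IsAllowed G a) (hb : IsAllowed G b)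
    (hlen : a.length = n + 2)
    (hga : Del g a) (hbg : Del b g) :
    (∃ g', IsAllowed G g' ∧ g' ≠ g ∧ Del g' a ∧ Del b g') ∨
    (∃ i ≤ n, b = (a.eraseIdx i).eraseIdx i) := by
  obtain ⟨l, x, m, y, r, rfl, rfl, hg⟩ := exists_eq_of_del_del hga hbg
  rcases eq_or_ne m [] with rfl | hm
  · refine Or.inr ⟨l.length, by simp at hlen; omega, ?_⟩
    simp [List.eraseIdx_length_append_cons]
  obtain ⟨hgy, hgx, hne⟩ := ha.erase_each_of_erase_both hm hb
  left
  rcases hg with rfl | rfl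
  · refine ⟨_, hgx, hne.symm, ?_, ?_⟩
    · simpa using del_append_cons (l ++ x :: m) r y
    · simpa using del_append_cons l (m ++ r) x
  · refine ⟨_, hgy, hne, ?_, ?_⟩
    · simpa using del_append_cons l (m ++ y :: r) x
    · simpa using del_append_cons (l ++ m) r y

/-- If `α > γ > β` are allowed elementary paths in a digraph `G`
(each obtained from the next by deleting one vertex), of dimensions `n+1`, `n`, `n−1`,
then either there is an allowed elementary `n`-path `γ' ≠ γ` with `β < γ' < α`, or `β`
is obtained from `α = v₀⋯v_{n+1}` by removing two consecutive vertices `vᵢ, v_{i+1}`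
for some `0 ≤ i ≤ n`. -/
theorem exists_other_middle_or_consecutive (G : DiGraph V) (n : ℕ) (hn : 1 ≤ n)
    (a g b : List V)
    (ha : IsAllowed G a) (hg : IsAllowed G g) (hb : IsAllowed G b)
    (hlen : a.length = n + 2)
    (hga : Del g a) (hbg : Del b g) :
    (∃ g', IsAllowed G g' ∧ g' ≠ g ∧ Del g' a ∧ Del b g') ∨
    (∃ i ≤ n, b = (a.eraseIdx i).eraseIdx i) :=
  exists_other_middle_or_consecutive_general G n a g b ha hb hlen hga hbg
end

section
/- Let G be a digraph and f a discrete Morse function on G. If v_0 v_1 ⋯ v_n v_0 (n ≥ 1) is a directed loop in G (an allowed elementary path returning to its starting vertex), then f(v_i) > 0 for every 0 ≤ i ≤ n. -/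
variable {V : Type}

theorem List.IsChain.rotate_closed {α : Type*} {R : α → α → Prop} {v : α} {s t : List α}
    (h : IsChain R (s ++ v :: t ++ [(s ++ v :: t).head (by simp)])) :
    IsChain R (v :: (t ++ s ++ [v])) := by
  rcases s with _ | ⟨b, s⟩
  · simpa using h
  · have h₁ : IsChain R ((v :: t) ++ [b]) := h.suffix ⟨b :: s, by simp⟩
    have h₂ : IsChain R ([b] ++ (s ++ [v])) := h.prefix ⟨t ++ [b], by simp⟩
    simpa using h₁.append_overlap h₂ (by simp)

theorem IsAllowed.infix {G : DiGraph V} {p q : List V} (hp : IsAllowed G p) (hq : q <:+: p)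
    (hne : q ≠ []) : IsAllowed G q :=
  ⟨hne, fun v hv => hp.2.1 v (hq.subset hv), hp.2.2.infix hq⟩

theorem del_cons_self (a : V) (l : List V) : Del l (a :: l) :=
  ⟨0, by simp, by simp⟩

theorem del_concat_self (l : List V) (a : V) : Del l (l ++ [a]) :=
  ⟨l.length, by simp, by rw [← List.dropLast_eq_eraseIdx (by simp), List.dropLast_concat]⟩

theorem IsLoop.exists_rotation {G : DiGraph V} {p : List V} (hp : IsLoop G p) {v : V}
    (hv : v ∈ p) : ∃ r, r ≠ [] ∧ IsAllowed G (v :: (r ++ [v])) := by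
  obtain ⟨⟨hne, hverts, hchain⟩, hlen, hends⟩ := hp
  obtain ⟨c, x, rfl⟩ := (List.eq_nil_or_concat' p).resolve_left hne
  have hc : c ≠ [] := by rintro rfl; simp at hlen
  have hx : x = c.head hc := by
    simpa [List.head?_append_of_ne_nil _ hc, List.head?_eq_some_head hc] using hends.symm
  have hvc : v ∈ c := by
    rcases List.mem_append.mp hv with hv | hv
    · exact hv
    rw [List.mem_singleton.mp hv, hx]
    exact List.head_mem hc
  obtain ⟨s, t, rfl⟩ := List.append_of_mem hvc
  refine ⟨t ++ s, ?_, by simp, fun w hw => hverts w ?_, (hx ▸ hchain).rotate_closed⟩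
  · simp only [List.length_append, List.length_cons, List.length_nil] at hlen
    rw [← List.length_pos_iff, List.length_append]
    omega
  · simp only [List.mem_cons, List.mem_append] at hw ⊢
    tauto

/-- If `f v = 0`, both `v :: r` and `r ++ [v]` insert `v` into `r` without changing the value, so
condition (ii) at `r` forces `v :: r = r ++ [v]`. Then `r` starts with `v`, and the first edge of
`v :: r` is a self-loop. -/
theorem IsMorse.ne_zero_of_isAllowed_cons_of_isAllowed_concat {G : DiGraph V} {f : V → ℝ}
    (hf : IsMorse G f) {v : V} {r : List V} (hr : r ≠ []) (hcons : IsAllowed G (v :: r))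
    (hconcat : IsAllowed G (r ++ [v])) : f v ≠ 0 := by
  intro hv
  have hrA : IsAllowed G r := hcons.infix (List.suffix_cons v r).isInfix hr
  have heq : v :: r = r ++ [v] :=
    (hf.2 r hrA).2 _ _ hcons (del_cons_self v r) (by simp [fval, hv])
      hconcat (del_concat_self r v) (by simp [fval, hv])
  obtain ⟨w, r, rfl⟩ := List.exists_cons_of_ne_nil hr
  have hwv : w = v := by simpa using (congrArg List.head? heq).symm
  exact G.edge_ne v w (List.isChain_cons_cons.mp hcons.2.2).1 hwv.symm

/-- If `f` is a discrete Morse function on a digraph `G` and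
`v₀v₁⋯vₙv₀` (`n ≥ 1`) is a directed loop in `G`, then `f` is strictly positive on all
vertices of the loop. -/
theorem pos_on_loop (G : DiGraph V) (f : V → ℝ) (hf : IsMorse G f)
    (p : List V) (hp : IsLoop G p) : ∀ v ∈ p, 0 < f v := by
  intro v hv
  obtain ⟨r, hr, hA⟩ := hp.exists_rotation hv
  have hcons : IsAllowed G (v :: r) := hA.infix ⟨[], [v], by simp⟩ (by simp)
  have hconcat : IsAllowed G (r ++ [v]) := hA.infix (List.suffix_cons v _).isInfix (by simp)
  exact (hf.1 v).lt_of_ne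
    (hf.ne_zero_of_isAllowed_cons_of_isAllowed_concat hr hcons hconcat).symm
end

section
/- Let G be a digraph and f a discrete Morse function on G. Then in any allowed elementary path v_0 ⋯ v_n in G, there is at most one index i with f(v_i) = 0. -/
variable {V : Type}

theorem List.exists_cons_append_singleton_infix {α : Type*} {l : List α} {i j : ℕ}
    (hij : i < j) (hj : j < l.length) : ∃ m, l[i] :: m ++ [l[j]] <:+: l := by
  induction l generalizing i j with
  | nil => simp at hj
  | cons a t ih =>
    cases i with
    | zero =>
      obtain ⟨k, rfl⟩ := Nat.exists_eq_add_of_lt hij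
      have hk : k < t.length := by simp at hj; omega
      refine ⟨t.take k, (List.prefix_cons_inj a).2 ?_ |>.isInfix⟩
      simpa [List.take_concat_get'] using List.take_prefix (k + 1) t
    | succ i =>
      obtain ⟨j, rfl⟩ : ∃ j', j = j' + 1 := ⟨j - 1, by omega⟩
      obtain ⟨m, hm⟩ := ih (Nat.lt_of_succ_lt_succ hij) (by simpa using hj)
      exact ⟨m, hm.trans (List.suffix_cons a t).isInfix⟩

theorem IsAllowed.of_infix {G : DiGraph V} {p q : List V} (hp : IsAllowed G p)
    (hqp : q <:+: p) (hq : q ≠ []) : IsAllowed G q :=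
  ⟨hq, fun v hv => hp.2.1 v (hqp.subset hv), hp.2.2.infix hqp⟩

/-- Deleting either end of `x ⋯ y` keeps the `f`-value, so the Morse condition forces the two
deletions to coincide, which makes `x → x` an edge. -/
theorem IsMorse.false_of_head_eq_zero_of_last_eq_zero {G : DiGraph V} {f : V → ℝ}
    (hf : IsMorse G f) {x y : V} {m : List V} (hq : IsAllowed G (x :: m ++ [y]))
    (hx : f x = 0) (hy : f y = 0) : False := by
  have hdel_head : Del (m ++ [y]) (x :: m ++ [y]) := ⟨0, by simp, rfl⟩
  have hdel_last : Del (x :: m) (x :: m ++ [y]) := ⟨(x :: m).length, by simp, by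
    simp [List.eraseIdx_append_of_length_le]⟩
  have heq : m ++ [y] = x :: m :=
    (hf.2 _ hq).1 _ _ (hq.of_infix (List.suffix_cons x _).isInfix (by simp)) hdel_head
      (by simp [fval, hx]) (hq.of_infix (List.prefix_append _ _).isInfix (by simp)) hdel_last
      (by simp [fval, hy])
  have hchain : List.IsChain G.Edge (x :: (m ++ [y])) := hq.2.2
  rw [heq, List.isChain_cons_cons] at hchain
  exact G.edge_ne x x hchain.1 rfl

theorem IsMorse.eq_of_getElem_eq_zero {G : DiGraph V} {f : V → ℝ} (hf : IsMorse G f)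
    {p : List V} (hp : IsAllowed G p) {i j : ℕ} (hi : i < p.length) (hj : j < p.length)
    (hfi : f p[i] = 0) (hfj : f p[j] = 0) : i = j := by
  by_contra hne
  wlog hij : i < j generalizing i j
  · exact this hj hi hfj hfi (Ne.symm hne) (by omega)
  obtain ⟨m, hm⟩ := List.exists_cons_append_singleton_infix hij hj
  exact hf.false_of_head_eq_zero_of_last_eq_zero (hp.of_infix hm (by simp)) hfi hfj

/-- If `f` is a discrete Morse function on a digraph `G`, then any
allowed elementary path in `G` has at most one index at which `f` vanishes. -/
theorem at_most_one_zero (G : DiGraph V) (f : V → ℝ) (hf : IsMorse G f)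
    (p : List V) (hp : IsAllowed G p) :
    ∀ i j : Fin p.length, f (p.get i) = 0 → f (p.get j) = 0 → i = j :=
  fun i j hi hj => Fin.ext (hf.eq_of_getElem_eq_zero hp i.2 j.2 hi hj)
end

section
/- Let G be a digraph, f a discrete Morse function on G, and α a non-critical allowed elementary path. Writing α = β_1*γ_1*⋯*γ_{k−1}*β_k as the canonical concatenation of simplicial allowed elementary paths β_i and directed loops γ_i, there exists some β_i which is non-critical (with respect to the restriction of f). -/
variable {V : Type}

/-- Glue (concatenate) a path with a list of further paths, identifying the last vertex
of each piece with the first vertex of the next. -/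
def glueAll : List V → List (List V) → List V
  | p, [] => p
  | p, q :: rest => glueAll (p ++ q.tail) rest

/-- `L = [β₁, γ₁, β₂, γ₂, …, β_k]` is a decomposition of the allowed elementary path `α`
as a concatenation `β₁*γ₁*β₂*⋯*β_k` of simplicial allowed elementary paths `βᵢ`
(possibly single vertices) and directed loops `γᵢ`. -/
def IsDecomp (G : DiGraph V) (α : List V) (L : List (List V)) : Prop :=
  L ≠ [] ∧ L.length % 2 = 1 ∧
  (∀ i : Fin L.length, if i.val % 2 = 0 then Simplicial G (L.get i) else IsLoop G (L.get i)) ∧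
  (∀ i : Fin L.length, ∀ h : i.val + 1 < L.length,
    (L.get i).getLast? = (L.get ⟨i.val + 1, h⟩).head?) ∧
  glueAll L.headI L.tail = α

/-- A decomposition produced by the greedy algorithm that cuts at the first repeated
vertex: each simplicial piece, extended by the interior of the following loop, is still
duplicate-free. -/
def GreedyDecomp (G : DiGraph V) (α : List V) (L : List (List V)) : Prop :=
  IsDecomp G α L ∧
  ∀ i : Fin L.length, i.val % 2 = 0 →
    (if h : i.val + 1 < L.length
      then ((L.get i) ++ (L.get ⟨i.val + 1, h⟩).tail.dropLast).Nodup
      else (L.get i).Nodup)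

/-!
A path is non-critical exactly when a zero-valued vertex can be deleted from it or inserted
into it. Under a Morse function no directed loop passes through a zero-valued vertex `w`:
rotating the loop to start at `w` gives an allowed path `w s w`, and deleting either end copy
of `w` yields two different allowed paths of the same value. Every vertex where two pieces of
the decomposition meet lies on a loop, so the vertex deleted from `α` (with its two
neighbours), or the edge of `α` into which a vertex is inserted, lies inside a single piece,
which is therefore non-critical. That piece is not a loop (inserting `w` into a loop gives a
loop through `w`), hence it is simplicial.
-/

namespace List

variable {α : Type*}

theorem pair_infix_append_cons {u v a : α} {l t : List α} (h : [u, v] <:+: l ++ a :: t) :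
    [u, v] <:+: l ++ [a] ∨ [u, v] <:+: a :: t := by
  induction l with
  | nil => exact Or.inr h
  | cons x l ih =>
    rcases infix_cons_iff.mp h with h | h
    · cases l <;> simp_all [infix_cons_iff]
    · exact (ih h).imp_left (infix_cons ·)

theorem triple_infix_append_cons {u w v a : α} {l t : List α} (h : [u, w, v] <:+: l ++ a :: t) :
    [u, w, v] <:+: l ++ [a] ∨ [u, w, v] <:+: a :: t ∨ w = a := by
  induction l with
  | nil => exact Or.inr (Or.inl h)
  | cons x l ih =>
    rcases infix_cons_iff.mp h with h | h
    · rcases l with _ | ⟨y, _ | ⟨z, l⟩⟩ <;> simp_all [infix_cons_iff]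
    · exact (ih h).imp_left (infix_cons ·)

theorem dropLast_append_of_getLast?_eq_head? {l m : List α} (h : l.getLast? = m.head?) :
    l.dropLast ++ m = l ++ m.tail := by
  rcases m with _ | ⟨a, t⟩
  · simp_all
  · obtain ⟨l, rfl⟩ := getLast?_eq_some_iff.mp h
    simp

theorem pair_infix_of_dropLast_append {u v : α} {l m : List α}
    (hlm : ∀ a ∈ l.getLast?, m.head? = some a) (h : [u, v] <:+: l.dropLast ++ m) :
    [u, v] <:+: l ∨ [u, v] <:+: m := by
  rcases l.eq_nil_or_concat with rfl | ⟨l, a, rfl⟩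
  · exact Or.inr h
  · obtain ⟨t, rfl⟩ := head?_eq_some_iff.mp (by simpa using hlm)
    simpa using pair_infix_append_cons (by simpa using h)

theorem triple_infix_of_dropLast_append {u w v : α} {l m : List α}
    (hlm : ∀ a ∈ l.getLast?, m.head? = some a) (h : [u, w, v] <:+: l.dropLast ++ m) :
    [u, w, v] <:+: l ∨ [u, w, v] <:+: m ∨ l.getLast? = some w := by
  rcases l.eq_nil_or_concat with rfl | ⟨l, a, rfl⟩
  · exact Or.inr (Or.inl h)
  · obtain ⟨t, rfl⟩ := head?_eq_some_iff.mp (by simpa using hlm)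
    simpa [eq_comm] using triple_infix_append_cons (by simpa using h)

end List

section Glue

variable {p : List V} {rest : List (List V)}

theorem glueAll_eq_append_flatten :
    glueAll p rest = p ++ (rest.map List.tail).flatten := by
  induction rest generalizing p with
  | nil => simp [glueAll]
  | cons q rest ih => simp [glueAll, ih]

theorem glueAll_cons_of_getLast?_eq {q : List V} (h : p.getLast? = q.head?) :
    glueAll p (q :: rest) = p.dropLast ++ glueAll q rest := by
  simp only [glueAll_eq_append_flatten, List.map_cons, List.flatten_cons]
  rw [← List.append_assoc, ← List.append_assoc, List.dropLast_append_of_getLast?_eq_head? h]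

theorem prefix_glueAll : p <+: glueAll p rest := by
  rw [glueAll_eq_append_flatten]
  exact List.prefix_append _ _

theorem head?_glueAll {a : V} (h : p.head? = some a) : (glueAll p rest).head? = some a := by
  obtain ⟨t, ht⟩ := prefix_glueAll (p := p) (rest := rest)
  rw [← ht, List.head?_append, h, Option.some_or]

theorem getLast_suffix_glueAll
    (hj : (p :: rest).IsChain (fun x y => x.getLast? = y.head?)) :
    (p :: rest).getLast (List.cons_ne_nil _ _) <:+ glueAll p rest := by
  induction rest generalizing p with
  | nil => exact List.suffix_refl _
  | cons q rest ih =>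
    rw [List.isChain_cons_cons] at hj
    rw [glueAll_cons_of_getLast?_eq hj.1, List.getLast_cons_cons]
    exact (ih hj.2).trans (List.suffix_append _ _)

theorem exists_mem_pair_infix_of_glueAll {u v : V}
    (hj : (p :: rest).IsChain (fun x y => x.getLast? = y.head?))
    (h : [u, v] <:+: glueAll p rest) :
    ∃ P ∈ p :: rest, [u, v] <:+: P := by
  induction rest generalizing p with
  | nil => exact ⟨p, List.mem_singleton_self _, h⟩
  | cons q rest ih =>
    rw [List.isChain_cons_cons] at hj
    rw [glueAll_cons_of_getLast?_eq hj.1] at h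
    rcases List.pair_infix_of_dropLast_append (fun a ha => head?_glueAll (hj.1 ▸ ha)) h with h | h
    · exact ⟨p, List.mem_cons_self, h⟩
    · obtain ⟨P, hP, h⟩ := ih hj.2 h
      exact ⟨P, List.mem_cons_of_mem _ hP, h⟩

theorem exists_mem_triple_infix_of_glueAll {u w v : V}
    (hj : (p :: rest).IsChain (fun x y => x.getLast? = y.head?))
    (h : [u, w, v] <:+: glueAll p rest) :
    (∃ P ∈ p :: rest, [u, w, v] <:+: P) ∨
      ∃ i, ∃ hi : i + 1 < (p :: rest).length, (p :: rest)[i].getLast? = some w := by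
  induction rest generalizing p with
  | nil => exact Or.inl ⟨p, List.mem_singleton_self _, h⟩
  | cons q rest ih =>
    rw [List.isChain_cons_cons] at hj
    rw [glueAll_cons_of_getLast?_eq hj.1] at h
    rcases List.triple_infix_of_dropLast_append (fun a ha => head?_glueAll (hj.1 ▸ ha)) h
      with h | h | h
    · exact Or.inl ⟨p, List.mem_cons_self, h⟩
    · rcases ih hj.2 h with ⟨P, hP, h⟩ | ⟨i, hi, h⟩
      · exact Or.inl ⟨P, List.mem_cons_of_mem _ hP, h⟩
      · exact Or.inr ⟨i + 1, by simpa using hi, h⟩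
    · exact Or.inr ⟨0, by simp, h⟩

end Glue

section Paths

variable {G : DiGraph V} {f : V → ℝ} {p q s M N X Y : List V} {u v w : V}

theorem fval_append_cons (f : V → ℝ) (X : List V) (w : V) (Y : List V) :
    fval f (X ++ w :: Y) = fval f (X ++ Y) + f w := by
  simp only [fval, List.map_append, List.map_cons, List.sum_append, List.sum_cons]
  ring

theorem del_append_cons_s9 (X : List V) (w : V) (Y : List V) : Del (X ++ Y) (X ++ w :: Y) :=
  ⟨X.length, by simp, by simp [List.eraseIdx_append_of_length_le]⟩

theorem Del.exists_eq_append_cons (h : Del p q) : ∃ X w Y, q = X ++ w :: Y ∧ p = X ++ Y := by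
  obtain ⟨i, hi, rfl⟩ := h
  exact ⟨q.take i, q[i], q.drop (i + 1), by simp, List.eraseIdx_eq_take_drop_succ _ _⟩

theorem exists_of_not_isCritical (h : ¬ IsCritical G f p) :
    (∃ X w Y, p = X ++ w :: Y ∧ IsAllowed G (X ++ Y) ∧ f w = 0) ∨
      ∃ X w Y, p = X ++ Y ∧ IsAllowed G (X ++ w :: Y) ∧ f w = 0 := by
  unfold IsCritical at h
  rw [not_and_or, not_not, not_not] at h
  rcases h with ⟨β, hβ, hdel, hval⟩ | ⟨δ, hδ, hdel, hval⟩
  · obtain ⟨X, w, Y, rfl, rfl⟩ := hdel.exists_eq_append_cons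
    exact Or.inl ⟨X, w, Y, rfl, hβ, by linarith [fval_append_cons f X w Y]⟩
  · obtain ⟨X, w, Y, rfl, rfl⟩ := hdel.exists_eq_append_cons
    exact Or.inr ⟨X, w, Y, rfl, hδ, by linarith [fval_append_cons f X w Y]⟩

theorem not_isCritical_of_erase (h : IsAllowed G (X ++ Y)) (hw : f w = 0) :
    ¬ IsCritical G f (X ++ w :: Y) := fun hc =>
  hc.1 ⟨X ++ Y, h, del_append_cons_s9 X w Y, by rw [fval_append_cons, hw, add_zero]⟩

theorem not_isCritical_of_insert (h : IsAllowed G (X ++ w :: Y)) (hw : f w = 0) :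
    ¬ IsCritical G f (X ++ Y) := fun hc =>
  hc.2 ⟨X ++ w :: Y, h, del_append_cons_s9 X w Y, by rw [fval_append_cons, hw, add_zero]⟩

/-- `IsAllowed` is stated with the deprecated `def` `List.Chain'`, which the `List.IsChain`
lemmas do not see through; this restatement makes them available. -/
theorem isAllowed_iff :
    IsAllowed G p ↔ p ≠ [] ∧ (∀ v ∈ p, v ∈ G.verts) ∧ p.IsChain G.Edge := Iff.rfl

theorem IsAllowed.of_infix_s9 (h : IsAllowed G q) (hpq : p <:+: q) (hp : p ≠ []) :
    IsAllowed G p :=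
  ⟨hp, fun v hv => h.2.1 v (hpq.subset hv), h.2.2.infix hpq⟩

theorem IsAllowed.edge (h : IsAllowed G (M ++ u :: v :: N)) : G.Edge u v :=
  (List.isChain_append_cons_cons.mp h.2.2).2.1

theorem IsAllowed.erase_mid (h : IsAllowed G (M ++ u :: w :: v :: N)) (huv : G.Edge u v) :
    IsAllowed G (M ++ u :: v :: N) := by
  obtain ⟨-, hmem, hch⟩ := isAllowed_iff.mp h
  rw [isAllowed_iff]
  refine ⟨by simp, fun x hx => hmem x (by simp at hx ⊢; tauto), ?_⟩
  simp only [List.isChain_append_cons_cons, List.isChain_cons_cons] at hch ⊢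
  exact ⟨hch.1, huv, hch.2.2.2⟩

theorem IsAllowed.insert_mid (h : IsAllowed G (M ++ u :: v :: N)) (huw : G.Edge u w)
    (hwv : G.Edge w v) : IsAllowed G (M ++ u :: w :: v :: N) := by
  obtain ⟨-, hmem, hch⟩ := isAllowed_iff.mp h
  rw [isAllowed_iff]
  refine ⟨by simp, fun x hx => ?_, ?_⟩
  · obtain rfl | hx : x = w ∨ x ∈ M ++ u :: v :: N := by simp at hx ⊢; tauto
    · exact G.edge_mem_right _ _ huw
    · exact hmem x hx
  · simp only [List.isChain_append_cons_cons, List.isChain_cons_cons] at hch ⊢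
    exact ⟨hch.1, huw, hwv, hch.2.2⟩

theorem IsAllowed.cons (h : IsAllowed G p) (hw : ∀ y ∈ p.head?, G.Edge w y) :
    IsAllowed G (w :: p) := by
  obtain ⟨hne, hmem, hch⟩ := isAllowed_iff.mp h
  obtain ⟨y, t, rfl⟩ := List.exists_cons_of_ne_nil hne
  refine ⟨by simp, ?_, hch.cons hw⟩
  simpa [G.edge_mem_left _ _ (hw y rfl)] using hmem

theorem IsAllowed.concat (h : IsAllowed G p) (hw : ∀ x ∈ p.getLast?, G.Edge x w) :
    IsAllowed G (p ++ [w]) := by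
  obtain ⟨hne, hmem, hch⟩ := isAllowed_iff.mp h
  obtain ⟨t, x, rfl⟩ := (List.eq_nil_or_concat p).resolve_left hne
  refine ⟨by simp, ?_, hch.append (List.isChain_singleton w) (by simpa using hw)⟩
  simpa [or_imp, forall_and, G.edge_mem_right _ _ (hw x (by simp))] using hmem

theorem IsLoop.insert_mid (h : IsLoop G (M ++ u :: v :: N)) (huw : G.Edge u w)
    (hwv : G.Edge w v) : IsLoop G (M ++ u :: w :: v :: N) := by
  obtain ⟨hp, -, hends⟩ := h
  refine ⟨hp.insert_mid huw hwv, by simp; omega, ?_⟩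
  rcases M with _ | ⟨a, M⟩ <;> simpa [List.getLast?_cons, List.getLast?_append] using hends

theorem IsLoop.exists_closed_walk (h : IsLoop G p) (hw : w ∈ p) :
    ∃ s, IsAllowed G (w :: s) ∧ s.getLast? = some w := by
  obtain ⟨hp, hlen, hends⟩ := h
  obtain ⟨hne, hmem, hch⟩ := isAllowed_iff.mp hp
  obtain ⟨X, Y, rfl⟩ := List.append_of_mem hw
  rcases X with _ | ⟨a, X⟩
  · refine ⟨Y, hp, ?_⟩
    have hY : Y ≠ [] := by rintro rfl; simp at hlen
    simpa [List.getLast?_cons_of_ne_nil hY] using hends.symm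
  · have hlast : (w :: Y).getLast? = some a := by
      simpa [List.getLast?_cons, List.getLast?_append] using hends.symm
    obtain ⟨Z, hZ⟩ := List.getLast?_eq_some_iff.mp hlast
    have hrot : w :: (Y ++ X ++ [w]) = Z ++ a :: (X ++ [w]) := by
      rw [List.append_assoc, ← List.cons_append, hZ]; simp
    refine ⟨Y ++ X ++ [w], isAllowed_iff.mpr ⟨by simp, fun x hx => hmem x ?_, ?_⟩, by simp⟩
    · simp at hx ⊢; tauto
    · rw [hrot, List.isChain_split, ← hZ]
      exact ⟨hch.infix (List.suffix_append _ _).isInfix, hch.infix ⟨[], Y, by simp⟩⟩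

theorem IsMorse.false_of_closed_walk (hf : IsMorse G f) (h : IsAllowed G (w :: s))
    (hs : s.getLast? = some w) (hw : f w = 0) : False := by
  obtain ⟨s, rfl⟩ := List.getLast?_eq_some_iff.mp hs
  have hval : ∀ X Y, fval f (X ++ Y) = fval f (X ++ w :: Y) := fun X Y => by
    rw [fval_append_cons, hw, add_zero]
  have hhead := (hf.2 _ h).1 (s ++ [w]) (w :: s)
    (h.of_infix_s9 (List.suffix_cons _ _).isInfix (by simp)) (del_append_cons_s9 [] w _) (hval [] _)
    (h.of_infix_s9 (by simpa using (List.prefix_append (w :: s) [w]).isInfix) (by simp))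
    (by simpa using del_append_cons_s9 (w :: s) w []) (by simpa using hval (w :: s) [])
  have hedge : ∀ y ∈ (s ++ [w]).head?, G.Edge w y := (List.isChain_cons.mp h.2.2).1
  exact G.edge_ne w w (hedge w (by simp [hhead])) rfl

theorem IsMorse.false_of_isLoop (hf : IsMorse G f) (hp : IsLoop G p) (hw : w ∈ p)
    (hw0 : f w = 0) : False :=
  let ⟨_, hs, hlast⟩ := hp.exists_closed_walk hw
  hf.false_of_closed_walk hs hlast hw0

end Paths

def HasNoncriticalSimplicialPiece (G : DiGraph V) (f : V → ℝ) (L : List (List V)) : Prop :=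
  ∃ i : Fin L.length, i.val % 2 = 0 ∧ ¬ IsCritical G f (L.get i)

namespace IsDecomp

variable {G : DiGraph V} {f : V → ℝ} {α P X Y : List V} {L : List (List V)} {u v w : V}

theorem get_spec (hD : IsDecomp G α L) (i : Fin L.length) :
    if i.val % 2 = 0 then Simplicial G (L.get i) else IsLoop G (L.get i) :=
  hD.2.2.1 i

theorem getLast?_eq_head? (hD : IsDecomp G α L) {i : ℕ} (hi : i + 1 < L.length) :
    L[i].getLast? = L[i + 1].head? :=
  hD.2.2.2.1 ⟨i, by omega⟩ hi

theorem isAllowed_of_mem (hD : IsDecomp G α L) (hP : P ∈ L) : IsAllowed G P := by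
  obtain ⟨i, rfl⟩ := List.get_of_mem hP
  have := hD.get_spec i
  split_ifs at this
  exacts [this.1, this.1]

theorem isLoop_of_odd (hD : IsDecomp G α L) {i : ℕ} (hi : i < L.length) (hodd : i % 2 = 1) :
    IsLoop G L[i] := by
  simpa [hodd] using hD.get_spec ⟨i, hi⟩

theorem exists_even_of_mem (hD : IsDecomp G α L) (hP : P ∈ L) (hloop : ¬ IsLoop G P) :
    ∃ i : Fin L.length, i.val % 2 = 0 ∧ L.get i = P := by
  obtain ⟨i, rfl⟩ := List.get_of_mem hP
  refine ⟨i, ?_, rfl⟩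
  by_contra hodd
  exact hloop (hD.isLoop_of_odd i.isLt (by omega))

theorem isChain_junction (hD : IsDecomp G α L) :
    L.IsChain (fun x y => x.getLast? = y.head?) :=
  List.isChain_iff_getElem.mpr fun _ hi => hD.getLast?_eq_head? hi

theorem exists_isLoop_of_junction (hD : IsDecomp G α L) {i : ℕ} (hi : i + 1 < L.length)
    (hw : L[i].getLast? = some w) : ∃ γ ∈ L, IsLoop G γ ∧ w ∈ γ := by
  rcases Nat.mod_two_eq_zero_or_one i with heven | hodd
  · have hhead : L[i + 1].head? = some w := (hD.getLast?_eq_head? hi).symm.trans hw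
    exact ⟨_, List.getElem_mem hi, hD.isLoop_of_odd hi (by omega), List.mem_of_mem_head? hhead⟩
  · exact ⟨_, List.getElem_mem (by omega), hD.isLoop_of_odd (by omega) hodd,
      List.mem_of_mem_getLast? hw⟩

theorem false_of_junction (hD : IsDecomp G α L) (hf : IsMorse G f) {i : ℕ}
    (hi : i + 1 < L.length) (hw : L[i].getLast? = some w) (hw0 : f w = 0) : False :=
  let ⟨_, _, hγ, hwγ⟩ := hD.exists_isLoop_of_junction hi hw
  hf.false_of_isLoop hγ hwγ hw0

theorem exists_of_mem (hD : IsDecomp G α L) (hP : P ∈ L) (hloop : ¬ IsLoop G P)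
    (hP' : ¬ IsCritical G f P) : HasNoncriticalSimplicialPiece G f L :=
  let ⟨i, hi, hiP⟩ := hD.exists_even_of_mem hP hloop
  ⟨i, hi, hiP ▸ hP'⟩


theorem exists_mem_pair_infix (hD : IsDecomp G α L) (h : [u, v] <:+: α) :
    ∃ P ∈ L, [u, v] <:+: P := by
  obtain ⟨p, rest, rfl⟩ := List.exists_cons_of_ne_nil hD.1
  exact exists_mem_pair_infix_of_glueAll hD.isChain_junction (hD.2.2.2.2 ▸ h)

theorem exists_mem_triple_infix (hD : IsDecomp G α L) (h : [u, w, v] <:+: α) :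
    (∃ P ∈ L, [u, w, v] <:+: P) ∨ ∃ i, ∃ hi : i + 1 < L.length, L[i].getLast? = some w := by
  obtain ⟨p, rest, rfl⟩ := List.exists_cons_of_ne_nil hD.1
  exact exists_mem_triple_infix_of_glueAll hD.isChain_junction (hD.2.2.2.2 ▸ h)

theorem head_prefix (hD : IsDecomp G α L) (h : 0 < L.length) : L[0] <+: α := by
  obtain ⟨p, rest, rfl⟩ := List.exists_cons_of_ne_nil hD.1
  exact hD.2.2.2.2 ▸ prefix_glueAll

theorem last_suffix (hD : IsDecomp G α L) {n : ℕ} (hn : n + 1 = L.length) : L[n] <:+ α := by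
  obtain ⟨p, rest, rfl⟩ := List.exists_cons_of_ne_nil hD.1
  have hlast := getLast_suffix_glueAll hD.isChain_junction
  rw [List.getLast_eq_getElem] at hlast
  simp only [← hn, Nat.add_sub_cancel] at hlast
  exact hD.2.2.2.2 ▸ hlast

theorem eq_of_length_eq_one (hD : IsDecomp G α L) (h : L.length = 1) : L[0] = α := by
  obtain ⟨p, _ | ⟨q, rest⟩, rfl⟩ := List.exists_cons_of_ne_nil hD.1
  · exact hD.2.2.2.2
  · simp at h


theorem exists_of_erase_head (hD : IsDecomp G (w :: Y) L) (hf : IsMorse G f) (hY : Y ≠ [])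
    (hw : f w = 0) : HasNoncriticalSimplicialPiece G f L := by
  have h0 : 0 < L.length := List.length_pos_iff.mpr hD.1
  have hP := hD.isAllowed_of_mem (List.getElem_mem h0)
  rcases List.prefix_cons_iff.mp (hD.head_prefix h0) with hnil | ⟨_ | ⟨c, R⟩, hP0, -⟩
  · exact absurd hnil hP.1
  · by_cases h1 : L.length = 1
    · exact absurd (by simpa [hP0] using (hD.eq_of_length_eq_one h1).symm) hY
    · exact (hD.false_of_junction hf (i := 0) (by omega) (by simp [hP0]) hw).elim
  · refine ⟨⟨0, h0⟩, rfl, ?_⟩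
    have hcR : IsAllowed G (c :: R) := hP.of_infix_s9 (hP0 ▸ List.suffix_cons _ _).isInfix (by simp)
    simpa [hP0] using not_isCritical_of_erase (X := []) hcR hw

theorem exists_of_erase_last (hD : IsDecomp G (X ++ [w]) L) (hf : IsMorse G f) (hX : X ≠ [])
    (hw : f w = 0) : HasNoncriticalSimplicialPiece G f L := by
  obtain ⟨n, hn⟩ := Nat.exists_eq_add_one.mpr (List.length_pos_iff.mpr hD.1)
  have hP := hD.isAllowed_of_mem (List.getElem_mem (by omega : n < L.length))
  rcases List.suffix_concat_iff.mp (hD.last_suffix hn.symm) with hnil | ⟨t, hPn, -⟩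
  · exact absurd hnil hP.1
  rcases t with _ | ⟨c, t⟩
  · rcases n with _ | m
    · exact absurd (by simpa [hPn] using (hD.eq_of_length_eq_one hn).symm) hX
    · exact (hD.false_of_junction hf (i := m) (by omega)
        ((hD.getLast?_eq_head? (by omega)).trans (by simp [hPn])) hw).elim
  · refine ⟨⟨n, by omega⟩, show n % 2 = 0 by have := hD.2.1; omega, ?_⟩
    have hct : IsAllowed G (c :: t) := hP.of_infix_s9 (hPn ▸ List.prefix_append _ _).isInfix (by simp)
    simp only [List.get_eq_getElem, hPn]
    exact not_isCritical_of_erase (by simpa using hct) hw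

theorem exists_of_erase_mid (hD : IsDecomp G (X ++ u :: w :: v :: Y) L) (hf : IsMorse G f)
    (huv : G.Edge u v) (hw : f w = 0) :
    HasNoncriticalSimplicialPiece G f L := by
  rcases hD.exists_mem_triple_infix (List.infix_append' _ _ _)
    with ⟨P, hP, M, N, rfl⟩ | ⟨i, hi, hjunc⟩
  · simp only [List.append_assoc, List.cons_append, List.nil_append] at hP
    by_cases hloop : IsLoop G (M ++ u :: w :: v :: N)
    · exact (hf.false_of_isLoop hloop (by simp) hw).elim
    · have hMN : IsAllowed G ((M ++ [u]) ++ v :: N) := by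
        simpa using (hD.isAllowed_of_mem hP).erase_mid huv
      have hnc := not_isCritical_of_erase hMN hw
      simp only [List.append_assoc, List.cons_append, List.nil_append] at hnc
      exact hD.exists_of_mem hP hloop hnc
  · exact (hD.false_of_junction hf hi hjunc hw).elim

theorem exists_of_insert_head (hD : IsDecomp G α L) (hw : ∀ y ∈ α.head?, G.Edge w y)
    (hw0 : f w = 0) : HasNoncriticalSimplicialPiece G f L := by
  have h0 : 0 < L.length := List.length_pos_iff.mpr hD.1
  have hP := hD.isAllowed_of_mem (List.getElem_mem h0)
  obtain ⟨t, ht⟩ := hD.head_prefix h0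
  refine ⟨⟨0, h0⟩, rfl, not_isCritical_of_insert (X := []) (hP.cons fun y hy => hw y ?_) hw0⟩
  rw [← ht, List.head?_append, hy, Option.some_or]; rfl

theorem exists_of_insert_last (hD : IsDecomp G α L) (hw : ∀ x ∈ α.getLast?, G.Edge x w)
    (hw0 : f w = 0) : HasNoncriticalSimplicialPiece G f L := by
  obtain ⟨n, hn⟩ := Nat.exists_eq_add_one.mpr (List.length_pos_iff.mpr hD.1)
  have hP := hD.isAllowed_of_mem (List.getElem_mem (by omega : n < L.length))
  obtain ⟨t, ht⟩ := hD.last_suffix hn.symm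
  refine ⟨⟨n, by omega⟩, show n % 2 = 0 by have := hD.2.1; omega, ?_⟩
  simpa using not_isCritical_of_insert (Y := []) (hP.concat fun x hx => hw x
    (by rw [← ht, List.getLast?_append_of_ne_nil _ hP.1, hx]; rfl)) hw0

theorem exists_of_insert_mid (hD : IsDecomp G (X ++ u :: v :: Y) L) (hf : IsMorse G f)
    (huw : G.Edge u w) (hwv : G.Edge w v) (hw0 : f w = 0) :
    HasNoncriticalSimplicialPiece G f L := by
  obtain ⟨P, hP, M, N, rfl⟩ := hD.exists_mem_pair_infix (List.infix_append' _ _ _)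
  simp only [List.append_assoc, List.cons_append, List.nil_append] at hP
  by_cases hloop : IsLoop G (M ++ u :: v :: N)
  · exact (hf.false_of_isLoop (hloop.insert_mid huw hwv) (by simp) hw0).elim
  · have hMN : IsAllowed G ((M ++ [u]) ++ w :: v :: N) := by
      simpa using (hD.isAllowed_of_mem hP).insert_mid huw hwv
    have hnc := not_isCritical_of_insert hMN hw0
    simp only [List.append_assoc, List.cons_append, List.nil_append] at hnc
    exact hD.exists_of_mem hP hloop hnc

theorem exists_of_erase (hD : IsDecomp G (X ++ w :: Y) L) (hf : IsMorse G f)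
    (hXY : IsAllowed G (X ++ Y)) (hw : f w = 0) :
    HasNoncriticalSimplicialPiece G f L := by
  rcases X.eq_nil_or_concat with rfl | ⟨X, u, rfl⟩
  · exact hD.exists_of_erase_head hf hXY.1 hw
  rcases Y with _ | ⟨v, Y⟩
  · exact hD.exists_of_erase_last hf (by simp) hw
  · simp only [List.concat_eq_append, List.append_assoc, List.cons_append, List.nil_append]
      at hD hXY
    exact hD.exists_of_erase_mid hf hXY.edge hw

theorem exists_of_insert (hD : IsDecomp G (X ++ Y) L) (hf : IsMorse G f)
    (hXwY : IsAllowed G (X ++ w :: Y)) (hw : f w = 0) :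
    HasNoncriticalSimplicialPiece G f L := by
  rcases Y with _ | ⟨v, Y⟩
  · rw [List.append_nil] at hD
    have hXw : ∀ x ∈ X.getLast?, G.Edge x w := fun x hx =>
      (List.isChain_append.mp hXwY.2.2).2.2 x hx w rfl
    exact hD.exists_of_insert_last hXw hw
  rcases X.eq_nil_or_concat with rfl | ⟨X, u, rfl⟩
  · exact hD.exists_of_insert_head (List.isChain_cons.mp hXwY.2.2).1 hw
  · simp only [List.concat_eq_append, List.append_assoc, List.cons_append, List.nil_append]
      at hD hXwY
    have hwv : G.Edge w v := IsAllowed.edge (M := X ++ [u]) (by simpa using hXwY)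
    exact hD.exists_of_insert_mid hf hXwY.edge hwv hw

end IsDecomp

theorem noncritical_piece_general (G : DiGraph V) (f : V → ℝ) (hf : IsMorse G f)
    (α : List V) (hnc : ¬ IsCritical G f α)
    (L : List (List V)) (hL : GreedyDecomp G α L) :
    ∃ i : Fin L.length, i.val % 2 = 0 ∧ ¬ IsCritical G f (L.get i) := by
  rcases exists_of_not_isCritical hnc with ⟨X, w, Y, rfl, hXY, hw⟩ | ⟨X, w, Y, rfl, hXwY, hw⟩
  · exact hL.1.exists_of_erase hf hXY hw
  · exact hL.1.exists_of_insert hf hXwY hw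

/-- Let `f` be a discrete Morse function on `G` and `α` a non-critical
allowed elementary path with canonical (greedy) decomposition
`α = β₁*γ₁*⋯*γ_{k−1}*β_k` into simplicial pieces (even positions of `L`) and directed
loops (odd positions). Then some simplicial piece `βᵢ` is non-critical. -/
theorem noncritical_piece (G : DiGraph V) (f : V → ℝ) (hf : IsMorse G f)
    (α : List V) (hα : IsAllowed G α) (hnc : ¬ IsCritical G f α)
    (L : List (List V)) (hL : GreedyDecomp G α L) :
    ∃ i : Fin L.length, i.val % 2 = 0 ∧ ¬ IsCritical G f (L.get i) :=
  noncritical_piece_general G f hf α hnc L hL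
end

section
/- There exists a digraph G with sub-digraph G' and a discrete Morse function f on G such that some allowed elementary path is critical in (G', f|_{G'}) but not critical in (G, f). Concretely, take V = {v_0,v_1,v_2}, G with edges {v_0→v_1, v_1→v_2, v_0→v_2}, f(v_1) = 0, f(v_0) = 1, f(v_2) = 2, and G' with edges {v_0→v_1, v_1→v_2}; then α = v_0 v_1 v_2 is critical in G' but not in G. -/
variable {V : Type}

/-- The digraph of Example 2: vertices `{v₀,v₁,v₂}`, edges `{v₀→v₁, v₁→v₂, v₀→v₂}`. -/
def G12 : DiGraph (Fin 3) where
  verts := Set.univ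
  Edge a b := (a = 0 ∧ b = 1) ∨ (a = 1 ∧ b = 2) ∨ (a = 0 ∧ b = 2)
  edge_mem_left := fun _ _ _ => trivial
  edge_mem_right := fun _ _ _ => trivial
  edge_ne := by decide

/-- The sub-digraph `G'` of Example 2: edges `{v₀→v₁, v₁→v₂}`. -/
def G12' : DiGraph (Fin 3) where
  verts := Set.univ
  Edge a b := (a = 0 ∧ b = 1) ∨ (a = 1 ∧ b = 2)
  edge_mem_left := fun _ _ _ => trivial
  edge_mem_right := fun _ _ _ => trivial
  edge_ne := by decide

/-- The Morse function of Example 2: `f(v₀)=1, f(v₁)=0, f(v₂)=2`. -/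
noncomputable def f12 : Fin 3 → ℝ := ![1, 0, 2]
/-!
Edges of both digraphs point upward in the order `0 < 1 < 2`, so allowed paths are strictly
increasing lists, determined by their vertex sets. Since the value of a path is the sum of its
vertex values, a deletion or insertion preserves the value exactly when the vertex involved is
the unique zero `v₁` of `f`; this yields the Morse property. In `G'` the only value-preserving
deletion from `v₀v₁v₂` gives `v₀v₂`, which is not allowed there, and no allowed path has four
vertices; in `G` the edge `v₀ → v₂` makes `v₀v₂` allowed.
-/
lemma fval_erase_add [DecidableEq V] (f : V → ℝ) {q : List V} {z : V} (hz : z ∈ q) :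
    fval f (q.erase z) + f z = fval f q := by
  rw [fval, fval, ((List.perm_cons_erase hz).map f).sum_eq, List.map_cons, List.sum_cons,
    add_comm]

lemma Del.length_add_one {p q : List V} (h : Del p q) : p.length + 1 = q.length := by
  obtain ⟨i, hi, rfl⟩ := h
  exact List.length_eraseIdx_add_one hi

lemma Del.exists_eq_erase [DecidableEq V] {p q : List V} (h : Del p q) (hq : q.Nodup) :
    ∃ z ∈ q, p = q.erase z := by
  obtain ⟨i, hi, rfl⟩ := h
  exact ⟨q[i], List.getElem_mem hi, (hq.erase_getElem i hi).symm⟩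

lemma Del.exists_eq_erase_of_fval_eq [DecidableEq V] {f : V → ℝ} {p q : List V} (h : Del p q)
    (hq : q.Nodup) (hf : fval f p = fval f q) : ∃ z ∈ q, f z = 0 ∧ p = q.erase z := by
  obtain ⟨z, hz, rfl⟩ := h.exists_eq_erase hq
  refine ⟨z, hz, ?_, rfl⟩
  linarith [fval_erase_add f hz]

section Increasing

variable [LinearOrder V] {G : DiGraph V}

lemma IsAllowed.pairwise_lt (hG : ∀ a b, G.Edge a b → a < b) {p : List V}
    (hp : IsAllowed G p) : p.Pairwise (· < ·) :=
  (hp.2.2.imp fun {a b} => hG a b).pairwise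

lemma IsAllowed.length_le_card [Fintype V] (hG : ∀ a b, G.Edge a b → a < b) {p : List V}
    (hp : IsAllowed G p) : p.length ≤ Fintype.card V :=
  (hp.pairwise_lt hG).nodup.length_le_card

theorem isMorse_of_edge_lt {f : V → ℝ} (hG : ∀ a b, G.Edge a b → a < b)
    (hf₀ : ∀ v, 0 ≤ f v) (hf : ∀ u v, f u = 0 → f v = 0 → u = v) : IsMorse G f := by
  refine ⟨hf₀, fun p hp => ⟨?_, ?_⟩⟩
  · intro β β' _ hβ eβ _ hβ' eβ'
    have hp' := (hp.pairwise_lt hG).nodup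
    obtain ⟨z, -, hz, rfl⟩ := hβ.exists_eq_erase_of_fval_eq hp' eβ
    obtain ⟨z', -, hz', rfl⟩ := hβ'.exists_eq_erase_of_fval_eq hp' eβ'
    rw [hf z z' hz hz']
  · intro α α' hα dα eα hα' dα' eα'
    obtain ⟨z, hz, hz0, rfl⟩ :=
      dα.exists_eq_erase_of_fval_eq (hα.pairwise_lt hG).nodup eα.symm
    obtain ⟨z', hz', hz0', hp⟩ :=
      dα'.exists_eq_erase_of_fval_eq (hα'.pairwise_lt hG).nodup eα'.symm
    obtain rfl := hf z z' hz0 hz0'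
    have hperm : α.Perm α' :=
      (List.perm_cons_erase hz).trans (hp ▸ (List.perm_cons_erase hz').symm)
    exact hperm.eq_of_pairwise (fun _ _ _ _ hab hba => absurd hba (lt_asymm hab))
      (hα.pairwise_lt hG) (hα'.pairwise_lt hG)

end Increasing

lemma G12_edge_lt : ∀ a b, G12.Edge a b → a < b := by
  simp only [G12]
  decide

lemma G12'_edge_lt : ∀ a b, G12'.Edge a b → a < b := by
  simp only [G12']
  decide

lemma f12_eq_zero_iff (v : Fin 3) : f12 v = 0 ↔ v = 1 := by
  fin_cases v <;> norm_num [f12]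

lemma isAllowed_G12_02 : IsAllowed G12 [0, 2] :=
  ⟨List.cons_ne_nil _ _, fun _ _ => trivial, List.isChain_pair.2 (.inr (.inr ⟨rfl, rfl⟩))⟩

lemma not_isAllowed_G12'_02 : ¬ IsAllowed G12' [0, 2] := by
  rintro ⟨-, -, h⟩
  have h02 : G12'.Edge 0 2 := List.isChain_pair.1 h
  simp [G12'] at h02

theorem isMorse_G12 : IsMorse G12 f12 :=
  isMorse_of_edge_lt G12_edge_lt (fun v => by fin_cases v <;> norm_num [f12])
    (fun u v hu hv => ((f12_eq_zero_iff u).1 hu).trans ((f12_eq_zero_iff v).1 hv).symm)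

lemma subdigraph_G12'_G12 : Subdigraph G12' G12 :=
  ⟨subset_rfl, fun _ _ h => h.elim Or.inl (Or.inr ∘ Or.inl)⟩

lemma isCritical_G12'_012 : IsCritical G12' f12 [0, 1, 2] := by
  constructor
  · rintro ⟨β, hβ, hdel, he⟩
    obtain ⟨z, -, hz, rfl⟩ := hdel.exists_eq_erase_of_fval_eq (by decide) he
    obtain rfl := (f12_eq_zero_iff z).1 hz
    exact not_isAllowed_G12'_02 hβ
  · rintro ⟨α, hα, hdel, -⟩
    have := hα.length_le_card G12'_edge_lt
    simp [← hdel.length_add_one] at this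

lemma not_isCritical_G12_012 : ¬ IsCritical G12 f12 [0, 1, 2] := fun hcrit =>
  hcrit.1 ⟨[0, 2], isAllowed_G12_02, ⟨1, by simp, rfl⟩, by norm_num [fval, f12]⟩

/-- There is a digraph `G` with sub-digraph `G'` and a discrete Morse
function `f` on `G` such that the path `α = v₀v₁v₂` is critical in `(G', f|_{G'})` but
not critical in `(G, f)`. -/
theorem critical_in_sub_not_in_ambient :
    IsMorse G12 f12 ∧ Subdigraph G12' G12 ∧
    IsCritical G12' f12 [0, 1, 2] ∧ ¬ IsCritical G12 f12 [0, 1, 2] :=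
  ⟨isMorse_G12, subdigraph_G12'_G12, isCritical_G12'_012, not_isCritical_G12_012⟩
end

section
/- Let G be a digraph and f a discrete Morse function on G. Then the partial matching M(G,f) = {(α^(n), β^(n+1)) : α < β, f(α) = f(β)} on allowed elementary paths is acyclic: there is no cycle a_1 < b_1 > a_2 < b_2 > ⋯ > a_k < b_k > a_1 with k ≥ 2, all (a_i, b_i) ∈ M(G,f), and all b_i distinct. -/
variable {V : Type}

lemma fval_eraseIdx (f : V → ℝ) (q : List V) (i : ℕ) (h : i < q.length) :
    fval f (q.eraseIdx i) + f q[i] = fval f q := by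
  have h' : i < (q.map f).length := by simpa using h
  have key : (q.map f).sum
      = ((q.map f).take i).sum + f q[i] + ((q.map f).drop (i+1)).sum := by
    conv_lhs => rw [← List.take_append_drop i (q.map f), List.drop_eq_getElem_cons h']
    simp only [List.sum_append, List.sum_cons, List.getElem_map]
    ring
  simp only [fval, List.eraseIdx_eq_take_drop_succ, List.map_append, List.map_take,
    List.map_drop, List.sum_append, key]
  ring

lemma fval_del_le {f : V → ℝ} (hf : ∀ v, 0 ≤ f v) {p q : List V} (h : Del p q) :
    fval f p ≤ fval f q := by
  obtain ⟨i, hi, rfl⟩ := h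
  have := fval_eraseIdx f q i hi
  nlinarith [hf q[i]]

/-- For a discrete Morse function `f` on a digraph `G`, the partial
matching `M(G,f)` is acyclic: there is no cycle
`a₁ < b₁ > a₂ < b₂ > ⋯ > a_k < b_k > a₁` with `k ≥ 2`, all `(aᵢ, bᵢ) ∈ M(G,f)` and all
`bᵢ` distinct. -/
theorem matching_acyclic (G : DiGraph V) (f : V → ℝ) (hf : IsMorse G f) :
    ¬ ∃ (k : ℕ) (_ : 2 ≤ k) (a b : ZMod k → List V),
        Function.Injective b ∧
        (∀ i, MPair G f (a i) (b i)) ∧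
        (∀ i, IsAllowed G (a (i + 1)) ∧ Del (a (i + 1)) (b i)) := by
  rintro ⟨k, hk, a, b, hb, hM, hD⟩
  haveI : NeZero k := ⟨by omega⟩
  haveI : Fact (1 < k) := ⟨hk⟩
  set g : ZMod k → ℝ := fun i => fval f (a i) with hg
  have hgb : ∀ i, g i = fval f (b i) := fun i => (hM i).2.2.2
  have hle : ∀ i, g (i + 1) ≤ g i := by
    intro i
    have h1 : fval f (a (i + 1)) ≤ fval f (b i) := fval_del_le hf.1 (hD i).2
    rw [hgb i]; exact h1
  have hsum : ∑ i : ZMod k, (g i - g (i + 1)) = 0 := by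
    have hshift : ∑ i : ZMod k, g (i + 1) = ∑ i : ZMod k, g i :=
      Fintype.sum_equiv (Equiv.addRight (1 : ZMod k)) _ _ (fun i => rfl)
    rw [Finset.sum_sub_distrib, hshift, sub_self]
  have heq : ∀ i, g (i + 1) = g i := by
    intro i
    have h0 : ∀ j ∈ Finset.univ, 0 ≤ g j - g (j + 1) :=
      fun j _ => sub_nonneg.2 (hle j)
    have := (Finset.sum_eq_zero_iff_of_nonneg h0).1 hsum i (Finset.mem_univ i)
    linarith
  have haconst : ∀ i, a (i + 1) = a i := by
    intro i
    obtain ⟨ha_i, hb_i, hdel, hfv⟩ := hM i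
    obtain ⟨ha1, hdel1⟩ := hD i
    have hfv1 : fval f (a (i + 1)) = fval f (b i) := by
      have h2 := heq i
      have h3 := hgb i
      simp only [hg] at h2 h3
      linarith
    exact (hf.2 (b i) hb_i).1 (a (i + 1)) (a i) ha1 hdel1 hfv1 ha_i hdel hfv
  have ha01 : a 1 = a 0 := by
    have := haconst 0
    simpa using this
  obtain ⟨ha0, hb0, hdel0, hfv0⟩ := hM 0
  obtain ⟨ha1', hb1, hdel1, hfv1⟩ := hM 1
  rw [ha01] at hdel1 hfv1
  have : b 0 = b 1 :=
    (hf.2 (a 0) ha0).2 (b 0) (b 1) hb0 hdel0 hfv0.symm hb1 hdel1 hfv1.symm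
  exact zero_ne_one (hb this)
end

section
/- Let G be a digraph, f a discrete Morse function on G such that the out-degree and in-degree of every zero-point of f are both 1. Then every pair (α, β) in the gradient vector field M(G,f) has one of three forms: (1) β = ⋯→u→v→w→⋯ and α = ⋯→u→w→⋯ (β contains the segment u→v→w and α is obtained by deleting v, requiring u→w ∈ E(G)); (2) β = ⋯→u→v and α = ⋯→u (v is the final vertex); (3) β = v→w→⋯ and α = w→⋯ (v is the initial vertex); where in each case f(v) = 0 and u→v→w are the unique in/out-neighbors of v. -/
variable {V : Type}

/-- Let `f` be a discrete Morse function on `G` such that every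
zero-point of `f` has out-degree and in-degree 1. Then every pair `(α, β) ∈ M(G,f)` has
one of three forms: `β = ⋯u→v→w⋯`, `α = ⋯u→w⋯` (with `u→w ∈ E(G)`); or
`β = ⋯→u→v`, `α = ⋯→u`; or `β = v→w→⋯`, `α = w→⋯`; where `f(v) = 0` and `u→v→w` are
the unique in/out-neighbors of `v`. -/
theorem mpair_forms (G : DiGraph V) (f : V → ℝ) (hf : IsMorse G f)
    (hdeg : ∀ v ∈ G.verts, f v = 0 → (∃! u, G.Edge u v) ∧ (∃! w, G.Edge v w)) :
    ∀ α β, MPair G f α β →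
      ∃ u v w, f v = 0 ∧ G.Edge u v ∧ G.Edge v w ∧
        ((∃ l₁ l₂, G.Edge u w ∧ β = l₁ ++ u :: v :: w :: l₂ ∧ α = l₁ ++ u :: w :: l₂) ∨
         (∃ l₁, β = l₁ ++ [u, v] ∧ α = l₁ ++ [u]) ∨
         (∃ l₂, β = v :: w :: l₂ ∧ α = w :: l₂)) := by
  rintro α β ⟨hα, hβ, ⟨i, hi, hae⟩, hval⟩
  have hdrop : β.drop i = β[i] :: β.drop (i+1) := List.drop_eq_getElem_cons hi
  set l₁ := β.take i with hl₁
  set v := β[i] with hv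
  set l₂ := β.drop (i+1) with hl₂
  have hβeq : β = l₁ ++ v :: l₂ := by
    rw [hl₁, hv, hl₂, ← hdrop, List.take_append_drop]
  have hαeq : α = l₁ ++ l₂ := by
    rw [hae, List.eraseIdx_eq_take_drop_succ]
  have hfv : f v = 0 := by
    have h := hval
    rw [hαeq, hβeq] at h
    simp [fval, List.map_append, List.sum_append] at h
    linarith
  have hvmem : v ∈ G.verts := hβ.2.1 v (by rw [hβeq]; simp)
  obtain ⟨⟨u, hu, huuniq⟩, ⟨w, hw, hwuniq⟩⟩ := hdeg v hvmem hfv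
  have hchainβ := hβ.2.2
  rw [hβeq] at hchainβ
  rcases List.eq_nil_or_concat l₁ with h1 | ⟨l₁', a, h1⟩
  · rcases l₂ with _ | ⟨b, l₂'⟩
    · exact absurd (by rw [hαeq, h1]; rfl) hα.1
    · have hedge : G.Edge v b := by
        rw [h1] at hchainβ
        simp only [List.nil_append] at hchainβ
        exact (List.isChain_cons_cons.mp hchainβ).1
      have hbw : b = w := hwuniq b hedge
      refine ⟨u, v, w, hfv, hu, hw, Or.inr (Or.inr ⟨l₂', ?_, ?_⟩)⟩
      · rw [hβeq, h1, hbw]; rfl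
      · rw [hαeq, h1, hbw]; rfl
  · have hedgeav : G.Edge a v := by
      rw [h1] at hchainβ
      have := (List.isChain_append.mp hchainβ).2.2
      exact this a (by simp) v (by simp)
    have hau : a = u := huuniq a hedgeav
    rcases l₂ with _ | ⟨b, l₂'⟩
    · refine ⟨u, v, w, hfv, hu, hw, Or.inr (Or.inl ⟨l₁', ?_, ?_⟩)⟩
      · rw [hβeq, h1, hau]; simp
      · rw [hαeq, h1, hau]; simp
    · have hedgevb : G.Edge v b := by
        rw [h1] at hchainβ
        have := (List.isChain_append.mp hchainβ).2.1
        exact (List.isChain_cons_cons.mp this).1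
      have hbw : b = w := hwuniq b hedgevb
      have hchainα := hα.2.2
      rw [hαeq, h1] at hchainα
      have hedgeab : G.Edge a b := by
        have := (List.isChain_append.mp hchainα).2.2
        exact this a (by simp) b (by simp)
      refine ⟨u, v, w, hfv, hu, hw, Or.inl ⟨l₁', l₂', ?_, ?_, ?_⟩⟩
      · rw [← hau, ← hbw]; exact hedgeab
      · rw [hβeq, h1, hau, hbw]; simp
      · rw [hαeq, h1, hau, hbw]; simp
end

section
/- Let G be a digraph, f a discrete Morse function on G whose zero-points all have out-degree and in-degree equal to 1, and let (G', f') be a one-step M-collapse of (G, f). Then M(G', f') ⊆ M(G, f): every gradient pair of the collapsed digraph is a gradient pair of the original. -/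
variable {V : Type}

/-- One-step `M`-collapse of a pair (digraph, discrete Morse function): a zero-point `v`
with unique in-neighbor `u` and unique out-neighbor `w` and with `u→w` an edge is
removed, together with the edges `u→v` and `v→w`; the function is unchanged. -/
def OneStepCollapse (P Q : DiGraph V × (V → ℝ)) : Prop :=
  ∃ u v w, P.2 v = 0 ∧ P.1.Edge u v ∧ P.1.Edge v w ∧
    (∀ x, P.1.Edge x v → x = u) ∧ (∀ x, P.1.Edge v x → x = w) ∧ P.1.Edge u w ∧
    Q.1.verts = P.1.verts \ {v} ∧
    (∀ a b, Q.1.Edge a b ↔ P.1.Edge a b ∧ ¬(a = u ∧ b = v) ∧ ¬(a = v ∧ b = w)) ∧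
    Q.2 = P.2

/-- The full `M`-collapse: iterate one-step `M`-collapses until no triple `(u,v,w)` with
`f(v) = 0`, `u→v→w` and `u→w` remains. -/
def FullCollapse (P Q : DiGraph V × (V → ℝ)) : Prop :=
  Relation.ReflTransGen OneStepCollapse P Q ∧
  ¬ ∃ u v w, Q.2 v = 0 ∧ Q.1.Edge u v ∧ Q.1.Edge v w ∧ Q.1.Edge u w

/-- Let `f` be a discrete Morse function on `G` whose zero-points all
have out-degree and in-degree 1, and let `(G', f')` be a one-step `M`-collapse of
`(G, f)`. Then `M(G', f') ⊆ M(G, f)`: every gradient pair of the collapsed digraph is a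
gradient pair of the original. -/
theorem mpairs_of_collapse_sub (G G' : DiGraph V) (f : V → ℝ) (hf : IsMorse G f)
    (hdeg : ∀ v ∈ G.verts, f v = 0 → (∃! u, G.Edge u v) ∧ (∃! w, G.Edge v w))
    (hcol : OneStepCollapse (G, f) (G', f)) :
    ∀ α β, MPair G' f α β → MPair G f α β := by
  obtain ⟨u, v, w, -, -, -, -, -, -, hverts, hedge, -⟩ := hcol
  have hall : ∀ p, IsAllowed G' p → IsAllowed G p := by
    rintro p ⟨hne, hmem, hch⟩
    refine ⟨hne, fun x hx => ?_, hch.imp fun a b hab => ((hedge a b).1 hab).1⟩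
    have := hmem x hx
    rw [hverts] at this
    exact this.1
  rintro α β ⟨ha, hb, hd, hv⟩
  exact ⟨hall α ha, hall β hb, hd, hv⟩
end

section
/- Let G be a digraph and f a discrete Morse function on G such that the out-degree and in-degree of every zero-point of f are both 1. Let (G̃, f̃) be the full M-collapse of (G, f) (iterating one-step M-collapses until no triple (u,v,w) with f(v) = 0, u→v→w, and u→w remains). Then the retraction r: G → G̃ defined by r(v) = w if f(v) = 0 and (u,v,w) is a collapsed triple, r(v) = v otherwise, is a deformation retraction: r is a digraph map with r|_{G̃} = id and i∘r ≃ id_G, where i: G̃ → G is the inclusion and ≃ is digraph homotopy. -/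
variable {V : Type}

/-- A digraph map from `G` to `H` (on the same ambient vertex type): vertices map to
vertices, and each directed edge `u→v` of `G` maps to either a single vertex
(`φ u = φ v`) or a directed edge of `H`. -/
def IsDMap (G H : DiGraph V) (φ : V → V) : Prop :=
  (∀ v ∈ G.verts, φ v ∈ H.verts) ∧
  ∀ u v, G.Edge u v → φ u = φ v ∨ H.Edge (φ u) (φ v)

/-- One-step homotopy between digraph maps `φ, ψ : G → H`, given by a digraph map
`F : G ⊡ I₁ → H` with `F|_{G⊡{0}} = φ` and `F|_{G⊡{1}} = ψ`, where `I₁` is the line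
digraph `0 → 1`. -/
def OneStepHtpy (G H : DiGraph V) (φ ψ : V → V) : Prop :=
  IsDMap G H φ ∧ IsDMap G H ψ ∧
  ∀ v ∈ G.verts, φ v = ψ v ∨ H.Edge (φ v) (ψ v)

/-- Homotopy of digraph maps `G → H`: the zigzag closure of one-step homotopies, which
corresponds to homotopies over arbitrary line digraphs `I_n`. -/
def Homotopic (G H : DiGraph V) : (V → V) → (V → V) → Prop :=
  Relation.ReflTransGen fun φ ψ => OneStepHtpy G H φ ψ ∨ OneStepHtpy G H ψ φ

/-!
A discrete Morse function admits no edge `a → b` between two zero-points: deleting either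
vertex of the path `a b` preserves the `f`-value, which gives two distinct such deletions.
Hence a collapsed vertex `v` is sent by `r` to its out-neighbour, a surviving vertex, and
`r` is a digraph map: an edge `a → v` with `a` surviving goes to `a → r v`, the bypass edge
along which `v` was collapsed, which is never removed later because both of its endpoints
survive. Since every `v` is fixed by `r` or joined to `r v` by an edge, `id` and `r` are
one step apart.
-/

section Digraph

variable {G H K : DiGraph V}

theorem isAllowed_singleton {v : V} (hv : v ∈ G.verts) : IsAllowed G [v] :=
  ⟨List.cons_ne_nil _ _, by simpa using hv, List.isChain_singleton v⟩

theorem isAllowed_pair {a b : V} (h : G.Edge a b) : IsAllowed G [a, b] :=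
  ⟨List.cons_ne_nil _ _,
    by simpa using ⟨G.edge_mem_left a b h, G.edge_mem_right a b h⟩,
    List.isChain_pair.mpr h⟩

theorem IsMorse.not_edge_of_eq_zero {f : V → ℝ} (hf : IsMorse G f) {a b : V}
    (ha : f a = 0) (hb : f b = 0) : ¬ G.Edge a b := by
  intro h
  have hval : ∀ x ∈ [a, b], fval f [x] = fval f [a, b] := by
    simp [fval, ha, hb]
  have hba : [b] = [a] :=
    (hf.2 [a, b] (isAllowed_pair h)).1 [b] [a]
      (isAllowed_singleton (G.edge_mem_right a b h)) ⟨0, by simp, rfl⟩ (hval b (by simp))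
      (isAllowed_singleton (G.edge_mem_left a b h)) ⟨1, by simp, rfl⟩ (hval a (by simp))
  exact G.edge_ne a b h (List.singleton_inj.mp hba).symm

theorem Subdigraph.refl (G : DiGraph V) : Subdigraph G G :=
  ⟨subset_rfl, fun _ _ h => h⟩

theorem Subdigraph.trans (hGH : Subdigraph G H) (hHK : Subdigraph H K) : Subdigraph G K :=
  ⟨hGH.1.trans hHK.1, fun a b h => hHK.2 a b (hGH.2 a b h)⟩

theorem isDMap_id : IsDMap G G id :=
  ⟨fun _ hv => hv, fun _ _ h => Or.inr h⟩

theorem IsDMap.mono {φ : V → V} (hφ : IsDMap G H φ) (hHK : Subdigraph H K) : IsDMap G K φ :=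
  ⟨fun v hv => hHK.1 (hφ.1 v hv), fun a b h => (hφ.2 a b h).imp id (hHK.2 _ _)⟩

theorem OneStepHtpy.homotopic_symm {φ ψ : V → V} (h : OneStepHtpy G H φ ψ) :
    Homotopic G H ψ φ :=
  Relation.ReflTransGen.single (Or.inr h)

end Digraph

section Collapse

variable {P Q : DiGraph V × (V → ℝ)}

theorem OneStepCollapse.subdigraph (h : OneStepCollapse P Q) : Subdigraph Q.1 P.1 := by
  obtain ⟨u, v, w, -, -, -, -, -, -, hverts, hedge, -⟩ := h
  exact ⟨hverts ▸ Set.sdiff_subset, fun a b hab => ((hedge a b).1 hab).1⟩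

theorem subdigraph_of_collapses (h : Relation.ReflTransGen OneStepCollapse P Q) :
    Subdigraph Q.1 P.1 := by
  induction h with
  | refl => exact Subdigraph.refl _
  | tail _ hstep ih => exact hstep.subdigraph.trans ih

theorem OneStepCollapse.edge_of_mem (h : OneStepCollapse P Q) {a b : V}
    (ha : a ∈ Q.1.verts) (hb : b ∈ Q.1.verts) (hab : P.1.Edge a b) : Q.1.Edge a b := by
  obtain ⟨u, v, w, -, -, -, -, -, -, hverts, hedge, -⟩ := h
  rw [hverts] at ha hb
  refine (hedge a b).2 ⟨hab, ?_, ?_⟩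
  · rintro ⟨-, rfl⟩
    exact hb.2 rfl
  · rintro ⟨rfl, -⟩
    exact ha.2 rfl

theorem edge_of_mem_of_collapses (h : Relation.ReflTransGen OneStepCollapse P Q) {a b : V}
    (ha : a ∈ Q.1.verts) (hb : b ∈ Q.1.verts) (hab : P.1.Edge a b) : Q.1.Edge a b := by
  induction h using Relation.ReflTransGen.head_induction_on with
  | refl => exact hab
  | head hstep hrest ih =>
    have hsub := subdigraph_of_collapses hrest
    exact ih (hstep.edge_of_mem (hsub.1 ha) (hsub.1 hb) hab)

theorem exists_bypass_of_collapses (h : Relation.ReflTransGen OneStepCollapse P Q) {b : V}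
    (hbP : b ∈ P.1.verts) (hbQ : b ∉ Q.1.verts) :
    ∃ u w, P.1.Edge u b ∧ P.1.Edge b w ∧
      (u ∈ Q.1.verts → w ∈ Q.1.verts → Q.1.Edge u w) := by
  induction h using Relation.ReflTransGen.head_induction_on with
  | refl => exact absurd hbP hbQ
  | @head P M hstep hrest ih =>
    by_cases hbM : b ∈ M.1.verts
    · obtain ⟨u, w, hub, hbw, hbypass⟩ := ih hbM
      have hsub := hstep.subdigraph
      exact ⟨u, w, hsub.2 _ _ hub, hsub.2 _ _ hbw, hbypass⟩
    · obtain ⟨u, v, w, -, huv, hvw, -, -, huw, hverts, hedge, -⟩ := hstep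
      obtain rfl : b = v := by
        by_contra hne
        exact hbM (hverts ▸ ⟨hbP, hne⟩)
      refine ⟨u, w, huv, hvw, fun hu hw => edge_of_mem_of_collapses hrest hu hw ?_⟩
      refine (hedge u w).2 ⟨huw, ?_, ?_⟩
      · rintro ⟨-, rfl⟩
        exact P.1.edge_ne _ _ hvw rfl
      · rintro ⟨rfl, -⟩
        exact P.1.edge_ne _ _ huv rfl

end Collapse

section Retraction

variable {G Gt : DiGraph V} {f : V → ℝ} {r : V → V}

theorem retraction_mem (hf : IsMorse G f)
    (hr_fix : ∀ v ∈ Gt.verts, r v = v)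
    (hr_move : ∀ v ∈ G.verts, v ∉ Gt.verts → f v = 0 ∧ G.Edge v (r v))
    {v : V} (hv : v ∈ G.verts) : r v ∈ Gt.verts := by
  by_cases hvt : v ∈ Gt.verts
  · exact (hr_fix v hvt).symm ▸ hvt
  · by_contra hrt
    obtain ⟨hfv, he⟩ := hr_move v hv hvt
    exact hf.not_edge_of_eq_zero hfv (hr_move _ (G.edge_mem_right _ _ he) hrt).1 he

theorem isDMap_retraction (hf : IsMorse G f)
    (hdeg : ∀ v ∈ G.verts, f v = 0 → (∃! u, G.Edge u v) ∧ (∃! w, G.Edge v w))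
    (hcol : Relation.ReflTransGen OneStepCollapse (G, f) (Gt, f))
    (hr_fix : ∀ v ∈ Gt.verts, r v = v)
    (hr_move : ∀ v ∈ G.verts, v ∉ Gt.verts → f v = 0 ∧ G.Edge v (r v)) :
    IsDMap G Gt r := by
  refine ⟨fun v hv => retraction_mem hf hr_fix hr_move hv, fun a b hab => ?_⟩
  have haG := G.edge_mem_left a b hab
  have hbG := G.edge_mem_right a b hab
  by_cases hat : a ∈ Gt.verts <;> by_cases hbt : b ∈ Gt.verts
  · right
    rw [hr_fix a hat, hr_fix b hbt]
    exact edge_of_mem_of_collapses hcol hat hbt hab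
  · right
    obtain ⟨hfb, hbr⟩ := hr_move b hbG hbt
    obtain ⟨u, w, hub, hbw, hbypass⟩ := exists_bypass_of_collapses hcol hbG hbt
    obtain rfl : u = a := (hdeg b hbG hfb).1.unique hub hab
    obtain rfl : w = r b := (hdeg b hbG hfb).2.unique hbw hbr
    rw [hr_fix u hat]
    exact hbypass hat (retraction_mem hf hr_fix hr_move hbG)
  · left
    obtain ⟨hfa, har⟩ := hr_move a haG hat
    rw [hr_fix b hbt]
    exact (hdeg a haG hfa).2.unique har hab
  · exact absurd hab (hf.not_edge_of_eq_zero (hr_move a haG hat).1 (hr_move b hbG hbt).1)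

end Retraction

/-- Let `f` be a discrete Morse function on `G` whose zero-points all
have out-degree and in-degree 1, and let `(G̃, f)` be the full `M`-collapse of `(G, f)`.
Let `r : G → G̃` be the retraction sending each collapsed zero-point `v` to its unique
out-neighbor `w` and fixing all other vertices. Then `r` is a deformation retraction:
`r` is a digraph map with `r|_{G̃} = id`, and `i ∘ r` is homotopic to `id_G`, where
`i : G̃ → G` is the inclusion. -/
theorem collapse_deformation_retraction (G Gt : DiGraph V) (f : V → ℝ)
    (hf : IsMorse G f)
    (hdeg : ∀ v ∈ G.verts, f v = 0 → (∃! u, G.Edge u v) ∧ (∃! w, G.Edge v w))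
    (hcol : FullCollapse (G, f) (Gt, f))
    (r : V → V)
    (hr_fix : ∀ v ∈ Gt.verts, r v = v)
    (hr_move : ∀ v ∈ G.verts, v ∉ Gt.verts → f v = 0 ∧ G.Edge v (r v)) :
    IsDMap G Gt r ∧ Homotopic G G r id := by
  have hmap := isDMap_retraction hf hdeg hcol.1 hr_fix hr_move
  refine ⟨hmap, OneStepHtpy.homotopic_symm
    ⟨isDMap_id, hmap.mono (subdigraph_of_collapses hcol.1), fun v hv => ?_⟩⟩
  by_cases hvt : v ∈ Gt.verts
  · exact Or.inl (hr_fix v hvt).symm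
  · exact Or.inr (hr_move v hv hvt).2
end

section
/- Let G be a digraph and f: V(G) → [0,∞) a discrete Morse function such that the out-degree and in-degree of every zero-point of f are both 1. Let G̃ be the M-collapse of (G, f). Then the inclusion i: G̃ → G induces isomorphisms on all path homology groups of digraphs. -/
variable {V : Type}

variable (R : Type) [CommRing R]

/-- The boundary operator `∂ = Σ (−1)^i dᵢ` on the free module generated by all vertex
sequences (paths), where `dᵢ` deletes the `i`-th vertex. -/
noncomputable def bdry : (List V →₀ R) →ₗ[R] (List V →₀ R) :=
  Finsupp.lsum R fun p =>
    ∑ i ∈ Finset.range p.length, ((-1 : R) ^ i) • Finsupp.lsingle (p.eraseIdx i)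

/-- `P_n(G)`: the free `R`-module generated by allowed elementary `n`-paths of `G`
(realized as the submodule of elements supported on allowed lists of length `n+1`). -/
noncomputable def PMod (G : DiGraph V) (n : ℕ) : Submodule R (List V →₀ R) :=
  Finsupp.supported R R {p | IsAllowed G p ∧ p.length = n + 1}

/-- `Ω_n(G) = P_n(G) ∩ ∂⁻¹ P_{n−1}(G)` (with `Ω₀(G) = P₀(G)`). -/
noncomputable def OmegaMod (G : DiGraph V) : ℕ → Submodule R (List V →₀ R)
  | 0 => PMod R G 0
  | (n+1) => PMod R G (n+1) ⊓ Submodule.comap (bdry (V := V) R) (PMod R G n)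

/-- The cycles of the chain complex `Ω_*(G)` in degree `n`. -/
noncomputable def cyc (G : DiGraph V) (n : ℕ) : Submodule R (List V →₀ R) :=
  OmegaMod R G n ⊓ LinearMap.ker (bdry (V := V) R)

/-- The boundaries of the chain complex `Ω_*(G)` in degree `n`. -/
noncomputable def bds (G : DiGraph V) (n : ℕ) : Submodule R (List V →₀ R) :=
  Submodule.map (bdry (V := V) R) (OmegaMod R G (n + 1))

/-- The `n`-th path homology of the digraph `G` with coefficients in `R`: the image of
the `n`-cycles of `Ω_*(G)` in the quotient by the `n`-boundaries. -/
noncomputable def PathHomology (G : DiGraph V) (n : ℕ) :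
    Submodule R ((List V →₀ R) ⧸ bds R G n) :=
  Submodule.map (bds R G n).mkQ (cyc R G n)

theorem isAllowed_mono {H G : DiGraph V} (hsub : Subdigraph H G) {p : List V}
    (hp : IsAllowed H p) : IsAllowed G p :=
  ⟨hp.1, fun v hv => hsub.1 (hp.2.1 v hv),
    List.IsChain.imp (fun a b h => hsub.2 a b h) hp.2.2⟩

theorem pmod_mono {H G : DiGraph V} (hsub : Subdigraph H G) (n : ℕ) :
    PMod R H n ≤ PMod R G n :=
  Finsupp.supported_mono fun _p hp => ⟨isAllowed_mono hsub hp.1, hp.2⟩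

theorem omegaMod_mono {H G : DiGraph V} (hsub : Subdigraph H G) (n : ℕ) :
    OmegaMod R H n ≤ OmegaMod R G n := by
  cases n with
  | zero => exact pmod_mono R hsub 0
  | succ n =>
      exact inf_le_inf (pmod_mono R hsub (n + 1)) (Submodule.comap_mono (pmod_mono R hsub n))

theorem cyc_mono {H G : DiGraph V} (hsub : Subdigraph H G) (n : ℕ) :
    cyc R H n ≤ cyc R G n :=
  inf_le_inf (omegaMod_mono R hsub n) le_rfl

theorem bds_mono {H G : DiGraph V} (hsub : Subdigraph H G) (n : ℕ) :
    bds R H n ≤ bds R G n :=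
  Submodule.map_mono (omegaMod_mono R hsub (n + 1))

/-- The map on the ambient quotients induced by the inclusion of a sub-digraph. -/
noncomputable def inducedQ {H G : DiGraph V} (hsub : Subdigraph H G) (n : ℕ) :
    ((List V →₀ R) ⧸ bds R H n) →ₗ[R] ((List V →₀ R) ⧸ bds R G n) :=
  Submodule.mapQ _ _ LinearMap.id (by
    intro x hx
    exact bds_mono R hsub n hx)

/-- The map induced on path homology by the inclusion of a sub-digraph. -/
noncomputable def inducedH {H G : DiGraph V} (hsub : Subdigraph H G) (n : ℕ) :
    PathHomology R H n →ₗ[R] PathHomology R G n :=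
  LinearMap.restrict (inducedQ R hsub n) (by
    rintro x ⟨c, hc, rfl⟩
    exact ⟨c, cyc_mono R hsub n hc, by simp [inducedQ, Submodule.mapQ_apply]⟩)

/-!
A one-step collapse removes a vertex `v` whose only in-neighbour is `u` and only out-neighbour
is `w`, where `u → w`. Sending `v` to `w` (and killing the paths through the edge `v → w`) is a
chain map back onto the smaller digraph, and appending `w` to the paths that end at `v` is a
chain homotopy between it and the identity. Both identities hold formally on words in which
`v` occurs at most as the last vertex or just before a final `w`, and `Ω`-chains live on such
words: a coefficient on an allowed path `… v w c …` would leave the face `… v c …`, which is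
not allowed and arises from no other allowed path, in the boundary. So every step, and hence
the whole collapse, induces isomorphisms on path homology.
-/

open Finsupp

section Words

variable {α : Type*} {E : α → α → Prop} {v w c : α}

theorem List.IsChain.and_not_pair {l : List α} (hl : l.IsChain E) (hvw : ¬[v, w] <:+: l) :
    l.IsChain fun a b => E a b ∧ ¬(a = v ∧ b = w) := by
  refine List.isChain_iff_forall_rel_of_append_cons_cons.mpr fun a b l₁ l₂ hl' => ⟨?_, ?_⟩
  · exact List.isChain_iff_forall_rel_of_append_cons_cons.mp hl hl'
  · rintro ⟨rfl, rfl⟩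
    exact hvw ⟨l₁, l₂, by simp [hl']⟩

theorem List.IsChain.eq_of_eraseIdx_eq (hout : ∀ y, E v y → y = w) (hvc : ¬E v c)
    {β : List α} : ∀ {γ p : List α} {i : ℕ}, p.IsChain E → p.eraseIdx i = γ ++ v :: c :: β →
      p = γ ++ v :: w :: c :: β ∧ i = γ.length + 1
  | [], [], _, _, h => by simp at h
  | [], [_], _ + 1, _, h => by simp at h
  | [], _ :: p, 0, hp, h => by
    simp only [List.eraseIdx_cons_zero, List.nil_append] at h
    subst h
    exact absurd (List.isChain_cons_cons.mp hp).2 (by simp [hvc])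
  | [], a :: b :: p, 1, hp, h => by
    simp only [List.eraseIdx_cons_succ, List.eraseIdx_cons_zero, List.nil_append,
      List.cons.injEq] at h
    obtain ⟨rfl, rfl⟩ := h
    simp [hout b (List.isChain_cons_cons.mp hp).1]
  | [], a :: b :: p, k + 2, hp, h => by
    simp only [List.eraseIdx_cons_succ, List.nil_append, List.cons.injEq] at h
    obtain ⟨rfl, rfl, -⟩ := h
    exact absurd (List.isChain_cons_cons.mp hp).1 hvc
  | _ :: _, [], _, _, h => by simp at h
  | a :: γ, _ :: p, 0, hp, h => by
    simp only [List.eraseIdx_cons_zero, List.cons_append] at h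
    subst h
    have hvc' := (hp.tail.infix (l₁ := [v, c]) ⟨a :: γ, β, by simp⟩)
    exact absurd (List.isChain_cons_cons.mp hvc').1 hvc
  | _ :: γ, a :: p, k + 1, hp, h => by
    simp only [List.eraseIdx_cons_succ, List.cons_append, List.cons.injEq] at h
    obtain ⟨rfl, h⟩ := h
    obtain ⟨rfl, rfl⟩ := List.IsChain.eq_of_eraseIdx_eq hout hvc hp.tail h
    simp

end Words

noncomputable def consMap (a : V) : (List V →₀ R) →ₗ[R] (List V →₀ R) :=
  lmapDomain R R (List.cons a)

theorem consMap_single (a : V) (l : List V) (c : R) :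
    consMap R a (single l c) = single (a :: l) c :=
  mapDomain_single

theorem bdry_single (l : List V) (c : R) :
    bdry R (single l c) =
      ∑ i ∈ Finset.range l.length, (-1 : R) ^ i • single (l.eraseIdx i) c := by
  simp [bdry]

theorem bdry_single_cons (a : V) (l : List V) (c : R) :
    bdry R (single (a :: l) c) = single l c - consMap R a (bdry R (single l c)) := by
  simp only [bdry_single, List.length_cons, Finset.sum_range_succ', map_sum, map_smul,
    consMap_single, List.eraseIdx_cons_succ, List.eraseIdx_cons_zero, pow_succ, mul_neg_one,
    neg_smul, Finset.sum_neg_distrib, pow_zero, one_smul]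
  abel

theorem bdry_consMap (a : V) (x : List V →₀ R) :
    bdry R (consMap R a x) = x - consMap R a (bdry R x) := by
  induction x using Finsupp.induction_linear with
  | zero => simp
  | add x y hx hy => simp only [map_add, hx, hy]; abel
  | single l c => rw [consMap_single, bdry_single_cons]

theorem map_mem_supported {α : Type*} {S S' : Set α} {T : (α →₀ R) →ₗ[R] (α →₀ R)}
    (hT : ∀ l ∈ S, T (single l 1) ∈ supported R R S') {x : α →₀ R}
    (hx : x ∈ supported R R S) : T x ∈ supported R R S' := by
  rw [supported_eq_span_single] at hx
  exact (Submodule.span_le (p := (supported R R S').comap T)).mpr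
    (by rintro _ ⟨l, hl, rfl⟩; exact hT l hl) hx

theorem omegaMod_le_pmod (G : DiGraph V) (n : ℕ) : OmegaMod R G n ≤ PMod R G n := by
  cases n with
  | zero => exact le_rfl
  | succ n => exact inf_le_left

theorem mem_omegaMod_of_bdry_eq_zero {G : DiGraph V} {n : ℕ} {x : List V →₀ R}
    (hx : x ∈ PMod R G n) (h0 : bdry R x = 0) : x ∈ OmegaMod R G n := by
  cases n with
  | zero => exact hx
  | succ n => exact ⟨hx, by simp [h0]⟩

theorem apply_eq_zero_of_bdry_apply_eq_zero {E : V → V → Prop} {v w c : V}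
    (hout : ∀ y, E v y → y = w) (hvc : ¬E v c)
    {x : List V →₀ R} (hx : x ∈ supported R R {l | l.IsChain E}) {γ β : List V}
    (hq : bdry R x (γ ++ v :: c :: β) = 0) : x (γ ++ v :: w :: c :: β) = 0 := by
  classical
  set q := γ ++ v :: c :: β
  set p₀ := γ ++ v :: w :: c :: β
  have hsingle : ∀ p, p.IsChain E → ∀ a : R,
      bdry R (single p a) q = if p = p₀ then (-1) ^ (γ.length + 1) * a else 0 := by
    intro p hp a
    simp only [bdry_single, Finset.sum_apply', Finsupp.smul_apply, single_apply, smul_eq_mul]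
    split_ifs with hp₀
    · rw [Finset.sum_eq_single (γ.length + 1)]
      · simp [hp₀, p₀, q, List.eraseIdx_append_of_length_le]
      · intro i _ hi
        rw [if_neg fun h => hi (hp.eq_of_eraseIdx_eq hout hvc h).2, mul_zero]
      · intro hi
        simp [hp₀, p₀] at hi
    · refine Finset.sum_eq_zero fun i _ => ?_
      rw [if_neg fun h => hp₀ (hp.eq_of_eraseIdx_eq hout hvc h).1, mul_zero]
  by_contra h0
  have hp₀ : p₀.IsChain E := (mem_supported R x).mp hx (mem_support_iff.mpr h0)
  have hbdry : bdry R x q = (-1) ^ (γ.length + 1) * x p₀ := by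
    conv_lhs => rw [← x.sum_single, map_finsuppSum, Finsupp.sum_apply]
    rw [Finsupp.sum_eq_single p₀ (fun p hp hne => by
        rw [hsingle p ((mem_supported R x).mp hx (mem_support_iff.mpr hp)), if_neg hne]) (by simp),
      hsingle p₀ hp₀, if_pos rfl]
  rw [hbdry] at hq
  exact h0 (by simpa using hq)

namespace VertexCollapse

variable [DecidableEq V] (v w : V)

noncomputable def retract : (List V →₀ R) →ₗ[R] (List V →₀ R) :=
  lsum R fun l => if [v, w] <:+: l then 0 else lsingle (l.map (Function.update id v w))

noncomputable def cone : (List V →₀ R) →ₗ[R] (List V →₀ R) :=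
  lsum R fun l =>
    if l.getLast? = some v then (-1 : R) ^ (l.length + 1) • lsingle (l ++ [w]) else 0

theorem retract_single (l : List V) (c : R) :
    retract R v w (single l c) =
      if [v, w] <:+: l then 0 else single (l.map (Function.update id v w)) c := by
  rw [retract, lsum_single]; split_ifs <;> rfl

theorem cone_single (l : List V) (c : R) :
    cone R v w (single l c) =
      if l.getLast? = some v then (-1 : R) ^ (l.length + 1) • single (l ++ [w]) c else 0 := by
  rw [cone, lsum_single]; split_ifs <;> rfl

variable {v w}

theorem retract_consMap {a : V} (ha : a ≠ v) (x : List V →₀ R) :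
    retract R v w (consMap R a x) = consMap R a (retract R v w x) := by
  induction x using Finsupp.induction_linear with
  | zero => simp
  | add x y hx hy => simp only [map_add, hx, hy]
  | single l c =>
    have hinf : [v, w] <:+: a :: l ↔ [v, w] <:+: l := by
      simp [List.infix_cons_iff, List.cons_prefix_cons, Ne.symm ha]
    simp only [consMap_single, retract_single, hinf]
    split_ifs
    · simp
    · simp [consMap_single, Function.update_of_ne ha]

theorem cone_consMap {a : V} (ha : a ≠ v) (x : List V →₀ R) :
    cone R v w (consMap R a x) = -consMap R a (cone R v w x) := by
  induction x using Finsupp.induction_linear with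
  | zero => simp
  | add x y hx hy => simp only [map_add, hx, hy, neg_add]
  | single l c =>
    cases l with
    | nil => simp [consMap_single, cone_single, ha]
    | cons b m =>
      simp only [consMap_single, cone_single, List.getLast?_cons_cons, List.cons_append,
        List.length_cons]
      split_ifs
      · rw [map_smul, consMap_single, pow_succ _ (m.length + 1 + 1), mul_neg_one, neg_smul]
      · simp

inductive VFinal (v w : V) : List V → Prop
  | nil : VFinal v w []
  | last : VFinal v w [v]
  | lastTwo : VFinal v w [v, w]
  | cons {a : V} {l : List V} : a ≠ v → VFinal v w l → VFinal v w (a :: l)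

theorem bdry_retract_single (hvw : v ≠ w) {l : List V} (hl : VFinal v w l) :
    bdry R (retract R v w (single l 1)) = retract R v w (bdry R (single l 1)) := by
  induction hl with
  | nil => simp [retract_single, bdry_single]
  | last => simp [retract_single, bdry_single, List.infix_cons_iff]
  | lastTwo =>
    simp [retract_single, bdry_single, Finset.sum_range_succ, List.infix_cons_iff, hvw.symm]
  | cons ha _ ih =>
    rw [← consMap_single, retract_consMap R ha, bdry_consMap, bdry_consMap, map_sub,
      retract_consMap R ha, ih]

theorem retract_sub_single (hvw : v ≠ w) {l : List V} (hl : VFinal v w l) :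
    retract R v w (single l 1) - single l 1 =
      bdry R (cone R v w (single l 1)) + cone R v w (bdry R (single l 1)) := by
  induction hl with
  | nil => simp [retract_single, bdry_single, cone_single]
  | last =>
    simp [retract_single, bdry_single, cone_single, Finset.sum_range_succ, List.infix_cons_iff,
      sub_eq_add_neg]
  | lastTwo =>
    simp [retract_single, bdry_single, cone_single, Finset.sum_range_succ, hvw.symm]
  | cons ha _ ih =>
    rw [← consMap_single, retract_consMap R ha, cone_consMap R ha, bdry_consMap, map_neg,
      bdry_consMap, map_sub, cone_consMap R ha, ← map_sub, ih]
    simp only [map_add]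
    abel

theorem vFinal_or_eq_append_cons_cons {E : V → V → Prop} (hout : ∀ y, E v y → y = w) :
    ∀ {l : List V}, l.IsChain E → VFinal v w l ∨ ∃ γ c β, l = γ ++ v :: w :: c :: β
  | [], _ => .inl .nil
  | [a], _ => if ha : a = v then .inl (ha ▸ .last) else .inl (.cons ha .nil)
  | a :: b :: l, hl => by
    by_cases ha : a = v
    · subst ha
      obtain rfl := hout b (List.isChain_cons_cons.mp hl).1
      rcases l with _ | ⟨c, β⟩
      · exact .inl .lastTwo
      · exact .inr ⟨[], c, β, rfl⟩
    · rcases vFinal_or_eq_append_cons_cons hout (List.isChain_cons_cons.mp hl).2 with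
        h | ⟨γ, c, β, h⟩
      · exact .inl (.cons ha h)
      · exact .inr ⟨a :: γ, c, β, by rw [h, List.cons_append]⟩

theorem bdry_retract (hvw : v ≠ w) {x : List V →₀ R}
    (hx : x ∈ supported R R {l | VFinal v w l}) :
    bdry R (retract R v w x) = retract R v w (bdry R x) := by
  rw [supported_eq_span_single] at hx
  refine LinearMap.eqOn_span (f := (bdry R).comp (retract R v w))
    (g := (retract R v w).comp (bdry R)) ?_ hx
  rintro _ ⟨l, hl, rfl⟩
  exact bdry_retract_single R hvw hl

theorem retract_sub_self (hvw : v ≠ w) {x : List V →₀ R}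
    (hx : x ∈ supported R R {l | VFinal v w l}) :
    retract R v w x - x = bdry R (cone R v w x) + cone R v w (bdry R x) := by
  rw [supported_eq_span_single] at hx
  refine LinearMap.eqOn_span (f := retract R v w - LinearMap.id)
    (g := (bdry R).comp (cone R v w) + (cone R v w).comp (bdry R)) ?_ hx
  rintro _ ⟨l, hl, rfl⟩
  exact retract_sub_single R hvw hl

end VertexCollapse

structure IsVertexCollapse (G G' : DiGraph V) (u v w : V) : Prop where
  edge_vw : G.Edge v w
  edge_uw : G.Edge u w
  eq_of_edge_to : ∀ x, G.Edge x v → x = u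
  eq_of_edge_from : ∀ x, G.Edge v x → x = w
  verts_eq : G'.verts = G.verts \ {v}
  edge_iff : ∀ a b, G'.Edge a b ↔ G.Edge a b ∧ ¬(a = u ∧ b = v) ∧ ¬(a = v ∧ b = w)

namespace IsVertexCollapse

open VertexCollapse

variable {G G' : DiGraph V} {u v w : V}

theorem ne (h : IsVertexCollapse G G' u v w) : v ≠ w := G.edge_ne v w h.edge_vw

theorem subdigraph (h : IsVertexCollapse G G' u v w) : Subdigraph G' G :=
  ⟨h.verts_eq ▸ Set.sdiff_subset, fun a b hab => ((h.edge_iff a b).mp hab).1⟩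

theorem not_mem_of_isAllowed (h : IsVertexCollapse G G' u v w) {p : List V}
    (hp : IsAllowed G' p) : v ∉ p := fun hv =>
  (h.verts_eq ▸ hp.2.1 v hv : v ∈ G.verts \ {v}).2 rfl

theorem edge_update [DecidableEq V] (h : IsVertexCollapse G G' u v w) {a b : V}
    (hab : G.Edge a b) (hvw : ¬(a = v ∧ b = w)) :
    G'.Edge (Function.update id v w a) (Function.update id v w b) := by
  by_cases hb : b = v
  · subst hb
    obtain rfl := h.eq_of_edge_to a hab
    rw [Function.update_self, Function.update_of_ne (G.edge_ne a b hab), h.edge_iff]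
    exact ⟨h.edge_uw, fun hw => h.ne hw.2.symm, fun hu => G.edge_ne a b hab hu.1⟩
  · have ha : a ≠ v := fun ha => hvw ⟨ha, h.eq_of_edge_from b (ha ▸ hab)⟩
    rw [Function.update_of_ne ha, Function.update_of_ne hb, h.edge_iff]
    exact ⟨hab, fun hu => hb hu.2, fun hv => ha hv.1⟩

theorem retract_mem_pmod [DecidableEq V] (h : IsVertexCollapse G G' u v w) {n : ℕ}
    {x : List V →₀ R} (hx : x ∈ PMod R G n) :
    retract R v w x ∈ PMod R G' n := by
  refine map_mem_supported R (fun p hp => ?_) hx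
  obtain ⟨hp, hlen⟩ := hp
  rw [retract_single]
  split_ifs with hvw
  · exact zero_mem _
  refine single_mem_supported R _ ⟨⟨by simpa using hp.1, ?_, ?_⟩, by simpa using hlen⟩
  · simp only [List.mem_map, h.verts_eq, forall_exists_index, and_imp]
    rintro _ y hy rfl
    by_cases hyv : y = v
    · subst hyv
      simp [G.edge_mem_right _ _ h.edge_vw, h.ne.symm]
    · simp [hp.2.1 y hy, hyv]
  · exact List.isChain_map _ |>.mpr
      ((hp.2.2.and_not_pair hvw).imp fun a b hab => h.edge_update hab.1 hab.2)

theorem cone_mem_pmod [DecidableEq V] (h : IsVertexCollapse G G' u v w) {n : ℕ}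
    {x : List V →₀ R} (hx : x ∈ PMod R G n) :
    cone R v w x ∈ PMod R G (n + 1) := by
  refine map_mem_supported R (fun p hp => ?_) hx
  obtain ⟨hp, hlen⟩ := hp
  rw [cone_single]
  split_ifs with hlast
  · refine Submodule.smul_mem _ _
      (single_mem_supported R _ ⟨⟨by simp, ?_, ?_⟩, by simp [hlen]⟩)
    · simpa [or_imp, forall_and] using ⟨hp.2.1, G.edge_mem_right _ _ h.edge_vw⟩
    · exact List.isChain_append.mpr ⟨hp.2.2, .singleton w, by simpa [hlast] using h.edge_vw⟩
  · exact zero_mem _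

theorem retract_eq_self [DecidableEq V] (h : IsVertexCollapse G G' u v w) {n : ℕ}
    {x : List V →₀ R} (hx : x ∈ PMod R G' n) :
    retract R v w x = x := by
  rw [PMod, supported_eq_span_single] at hx
  refine LinearMap.eqOn_span (f := retract R v w) (g := LinearMap.id) ?_ hx
  rintro _ ⟨p, ⟨hp, -⟩, rfl⟩
  have hv := h.not_mem_of_isAllowed hp
  rw [LinearMap.id_apply, retract_single, if_neg fun hi => hv (hi.subset (by simp)),
    List.map_congr_left fun y hy => Function.update_of_ne (ne_of_mem_of_not_mem hy hv) w id,
    List.map_id]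

theorem omegaMod_le_supported_vFinal [DecidableEq V] (h : IsVertexCollapse G G' u v w)
    (n : ℕ) : OmegaMod R G n ≤ supported R R {l | VFinal v w l} := by
  intro x hx
  refine (mem_supported' R x).mpr fun l hl => by_contra fun h0 => ?_
  obtain ⟨hlG, hlen⟩ := (mem_supported R x).mp (omegaMod_le_pmod R G n hx)
    (mem_support_iff.mpr h0)
  obtain hfin | ⟨γ, c, β, rfl⟩ := vFinal_or_eq_append_cons_cons h.eq_of_edge_from hlG.2.2
  · exact hl hfin
  have hwc : G.Edge w c :=
    List.isChain_iff_forall_rel_of_append_cons_cons.mp hlG.2.2 (l₁ := γ ++ [v]) (l₂ := β)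
      (by simp)
  have hvc : ¬G.Edge v c := fun hvc => G.edge_ne w c hwc (h.eq_of_edge_from c hvc).symm
  cases n with
  | zero => simp at hlen; omega
  | succ n =>
    have hq : bdry R x (γ ++ v :: c :: β) = 0 :=
      (mem_supported' R _).mp hx.2 _ fun hq => hvc
        (List.isChain_iff_forall_rel_of_append_cons_cons.mp hq.1.2.2 (l₁ := γ) (l₂ := β) rfl)
    exact h0 (apply_eq_zero_of_bdry_apply_eq_zero R h.eq_of_edge_from hvc
      (supported_mono (fun p hp => hp.1.2.2) hx.1) hq)

theorem exists_cyc_sub_mem_bds (h : IsVertexCollapse G G' u v w) {n : ℕ}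
    {x : List V →₀ R} (hx : x ∈ cyc R G n) : ∃ y ∈ cyc R G' n, x - y ∈ bds R G n := by
  classical
  obtain ⟨hxΩ, hx0⟩ := hx
  have hxP := omegaMod_le_pmod R G n hxΩ
  have hxF := h.omegaMod_le_supported_vFinal R n hxΩ
  have hcyc : bdry R (retract R v w x) = 0 := by
    rw [bdry_retract R h.ne hxF, LinearMap.mem_ker.mp hx0, map_zero]
  have hhom : retract R v w x - x = bdry R (cone R v w x) := by
    rw [retract_sub_self R h.ne hxF, LinearMap.mem_ker.mp hx0, map_zero, add_zero]
  have hcone : cone R v w x ∈ OmegaMod R G (n + 1) :=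
    ⟨h.cone_mem_pmod R hxP, by
      change bdry R (cone R v w x) ∈ PMod R G n
      rw [← hhom]
      exact sub_mem (pmod_mono R h.subdigraph n (h.retract_mem_pmod R hxP)) hxP⟩
  exact ⟨retract R v w x,
    ⟨mem_omegaMod_of_bdry_eq_zero R (h.retract_mem_pmod R hxP) hcyc, hcyc⟩,
    -cone R v w x, neg_mem hcone, by rw [map_neg, ← hhom, neg_sub]⟩

theorem mem_bds_of_mem_bds (h : IsVertexCollapse G G' u v w) {n : ℕ} {x : List V →₀ R}
    (hx : x ∈ cyc R G' n) (hb : x ∈ bds R G n) : x ∈ bds R G' n := by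
  classical
  obtain ⟨z, hz, rfl⟩ := hb
  have hxP : bdry R z ∈ PMod R G' n := omegaMod_le_pmod R G' n hx.1
  have hbdry : bdry R (retract R v w z) = bdry R z := by
    rw [bdry_retract R h.ne (h.omegaMod_le_supported_vFinal R (n + 1) hz),
      h.retract_eq_self R hxP]
  refine ⟨retract R v w z, ⟨h.retract_mem_pmod R hz.1, ?_⟩, hbdry⟩
  change bdry R (retract R v w z) ∈ PMod R G' n
  rwa [hbdry]

end IsVertexCollapse

/-- Bijectivity of `inducedH`, stated on representing cycles so that it composes along a chain
of inclusions. -/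
structure IsHomologyEquivalence (H G : DiGraph V) : Prop where
  subdigraph : Subdigraph H G
  exists_cyc_sub_mem_bds : ∀ n, ∀ x ∈ cyc R G n, ∃ y ∈ cyc R H n, x - y ∈ bds R G n
  mem_bds_of_mem_bds : ∀ n, ∀ x ∈ cyc R H n, x ∈ bds R G n → x ∈ bds R H n

namespace IsHomologyEquivalence

theorem refl (G : DiGraph V) : IsHomologyEquivalence R G G :=
  ⟨⟨subset_rfl, fun _ _ => id⟩, fun _ x hx => ⟨x, hx, by simp⟩, fun _ _ _ => id⟩

theorem trans {A B C : DiGraph V} (hAB : IsHomologyEquivalence R A B)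
    (hBC : IsHomologyEquivalence R B C) : IsHomologyEquivalence R A C where
  subdigraph := ⟨hAB.subdigraph.1.trans hBC.subdigraph.1,
    fun a b hab => hBC.subdigraph.2 a b (hAB.subdigraph.2 a b hab)⟩
  exists_cyc_sub_mem_bds n x hx := by
    obtain ⟨y, hy, hxy⟩ := hBC.exists_cyc_sub_mem_bds n x hx
    obtain ⟨z, hz, hyz⟩ := hAB.exists_cyc_sub_mem_bds n y hy
    exact ⟨z, hz, by
      simpa using add_mem hxy (bds_mono R hBC.subdigraph n hyz)⟩
  mem_bds_of_mem_bds n x hx hb :=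
    hAB.mem_bds_of_mem_bds n x hx
      (hBC.mem_bds_of_mem_bds n x (cyc_mono R hAB.subdigraph n hx) hb)

theorem of_isVertexCollapse {G G' : DiGraph V} {u v w : V} (h : IsVertexCollapse G G' u v w) :
    IsHomologyEquivalence R G' G :=
  ⟨h.subdigraph, fun _ _ => h.exists_cyc_sub_mem_bds R, fun _ _ => h.mem_bds_of_mem_bds R⟩

theorem of_reflTransGen {P Q : DiGraph V × (V → ℝ)}
    (hPQ : Relation.ReflTransGen OneStepCollapse P Q) : IsHomologyEquivalence R Q.1 P.1 := by
  induction hPQ with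
  | refl => exact refl R _
  | tail _ hstep ih =>
    obtain ⟨u, v, w, -, -, hvw, hin, hout, huw, hverts, hedge, -⟩ := hstep
    exact (of_isVertexCollapse R ⟨hvw, huw, hin, hout, hverts, hedge⟩).trans R ih

theorem bijective_inducedH {H G : DiGraph V} (e : IsHomologyEquivalence R H G)
    (hsub : Subdigraph H G) (n : ℕ) : Function.Bijective (inducedH R hsub n) := by
  refine ⟨(injective_iff_map_eq_zero _).mpr ?_, ?_⟩
  · rintro ⟨_, x, hx, rfl⟩ h0
    have hxG : x ∈ bds R G n := (Submodule.Quotient.mk_eq_zero _).mp (congrArg Subtype.val h0)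
    exact Subtype.ext ((Submodule.Quotient.mk_eq_zero _).mpr (e.mem_bds_of_mem_bds n x hx hxG))
  · rintro ⟨_, x, hx, rfl⟩
    obtain ⟨y, hy, hxy⟩ := e.exists_cyc_sub_mem_bds n x hx
    exact ⟨⟨_, y, hy, rfl⟩, Subtype.ext ((Submodule.Quotient.eq _).mpr hxy).symm⟩

end IsHomologyEquivalence

theorem collapse_path_homology_iso (G Gt : DiGraph V) (f : V → ℝ)
    (hcol : FullCollapse (G, f) (Gt, f))
    (hsub : Subdigraph Gt G) :
    ∀ n : ℕ, Function.Bijective (inducedH R hsub n) :=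
  (IsHomologyEquivalence.of_reflTransGen R hcol.1).bijective_inducedH R hsub
end
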